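/- For strongly convergent π-processes P and Q, must equivalence implies may equivalence: if P ≈_must Q then P ≈_may Q. -/
import Mathlib

set_option linter.unusedVariables false

/-! Core formalization of the π-calculus with name dichotomy, extended for
testing semantics with separated choices and the success action ω. -/

abbrev Name := ℕ

/-- Names and name variables. -/
inductive NV : Type
  | nm : Name → NV
  | vr : ℕ → NV
  deriving DecidableEq

/-- π-terms, extended with separated choices and the success term ω. -/
inductive Term : Type
  | nil : Term
  | inp : NV → ℕ → (k : ℕ) → (Fin k → Term) → Term            -- Σ_{i∈I} n(x).T_i
  | out : NV → (k : ℕ) → (Fin k → NV) → (Fin k → Term) → Term  -- Σ_{i∈I} n̄ m_i.T_i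
  | par : Term → Term → Term
  | res : Name → Term → Term
  | mat : NV → NV → Term → Term
  | mis : NV → NV → Term → Term
  | repInp : NV → ℕ → Term → Term                              -- !n(x).T
  | repOut : NV → NV → Term → Term                             -- !n̄m.T
  | sepInp : (k : ℕ) → (Fin k → NV) → ℕ → (Fin k → Term) → Term        -- Σ_{i∈I} n_i(x).T_i
  | sepOut : (k : ℕ) → (Fin k → NV) → (Fin k → NV) → (Fin k → Term) → Term -- Σ_{i∈I} n̄_i m_i.T_i
  | omega : Term                                               -- success indicator ω

namespace NV

def sub (σ : ℕ → NV) : NV → NV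
  | nm a => nm a
  | vr x => σ x

def vars : NV → Set ℕ
  | nm _ => ∅
  | vr x => {x}

end NV

namespace Term

/-- Apply a substitution, not substituting bound occurrences. -/
def applyVar (σ : ℕ → NV) : Term → Term
  | nil => nil
  | inp n x k Ts => inp (n.sub σ) x k (fun i => (Ts i).applyVar (Function.update σ x (NV.vr x)))
  | out n k ms Ts => out (n.sub σ) k (fun i => (ms i).sub σ) (fun i => (Ts i).applyVar σ)
  | par S T => par (S.applyVar σ) (T.applyVar σ)
  | res c T => res c (T.applyVar σ)
  | mat p q T => mat (p.sub σ) (q.sub σ) (T.applyVar σ)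
  | mis p q T => mis (p.sub σ) (q.sub σ) (T.applyVar σ)
  | repInp n x T => repInp (n.sub σ) x (T.applyVar (Function.update σ x (NV.vr x)))
  | repOut n m T => repOut (n.sub σ) (m.sub σ) (T.applyVar σ)
  | sepInp k ns x Ts =>
      sepInp k (fun i => (ns i).sub σ) x (fun i => (Ts i).applyVar (Function.update σ x (NV.vr x)))
  | sepOut k ns ms Ts =>
      sepOut k (fun i => (ns i).sub σ) (fun i => (ms i).sub σ) (fun i => (Ts i).applyVar σ)
  | omega => omega

/-- Substitute the single name `c` for the name variable `x`: `T{c/x}`. -/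
def subst1 (x : ℕ) (c : Name) (T : Term) : Term :=
  T.applyVar (fun y => if y = x then NV.nm c else NV.vr y)

/-- Free name variables. -/
def fvar : Term → Set ℕ
  | nil => ∅
  | inp n x k Ts => n.vars ∪ ((⋃ i, (Ts i).fvar) \ {x})
  | out n k ms Ts => n.vars ∪ (⋃ i, (ms i).vars ∪ (Ts i).fvar)
  | par S T => S.fvar ∪ T.fvar
  | res _ T => T.fvar
  | mat p q T => p.vars ∪ q.vars ∪ T.fvar
  | mis p q T => p.vars ∪ q.vars ∪ T.fvar
  | repInp n x T => n.vars ∪ (T.fvar \ {x})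
  | repOut n m T => n.vars ∪ m.vars ∪ T.fvar
  | sepInp k ns x Ts => (⋃ i, (ns i).vars) ∪ ((⋃ i, (Ts i).fvar) \ {x})
  | sepOut k ns ms Ts => ⋃ i, (ns i).vars ∪ (ms i).vars ∪ (Ts i).fvar
  | omega => ∅

/-- A π-term of the (unextended) π-calculus: no separated choice, no ω. -/
def isPi : Term → Prop
  | nil => True
  | inp _ _ _ Ts => ∀ i, isPi (Ts i)
  | out _ _ _ Ts => ∀ i, isPi (Ts i)
  | par S T => isPi S ∧ isPi T
  | res _ T => isPi T
  | mat _ _ T => isPi T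
  | mis _ _ T => isPi T
  | repInp _ _ T => isPi T
  | repOut _ _ T => isPi T
  | sepInp _ _ _ _ => False
  | sepOut _ _ _ _ => False
  | omega => False

/-- A replication-free term. -/
def isFinite : Term → Prop
  | nil => True
  | inp _ _ _ Ts => ∀ i, isFinite (Ts i)
  | out _ _ _ Ts => ∀ i, isFinite (Ts i)
  | par S T => isFinite S ∧ isFinite T
  | res _ T => isFinite T
  | mat _ _ T => isFinite T
  | mis _ _ T => isFinite T
  | repInp _ _ _ => False
  | repOut _ _ _ => False
  | sepInp _ _ _ Ts => ∀ i, isFinite (Ts i)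
  | sepOut _ _ _ Ts => ∀ i, isFinite (Ts i)
  | omega => True

end Term

/-- A process is a closed term. -/
def Closed (P : Term) : Prop := P.fvar = ∅

/-- A π-process: a closed term of the unextended π-calculus. -/
def IsPiProc (P : Term) : Prop := P.isPi ∧ Closed P

/-- Labels (external actions). -/
inductive Label : Type
  | inp : Name → Name → Label      -- ab
  | out : Name → Name → Label      -- āb
  | bout : Name → Name → Label     -- ā(c)
  deriving DecidableEq

def Label.names : Label → Set Name
  | .inp a b => {a, b}
  | .out a b => {a, b}
  | .bout a c => {a, c}

/-- Actions: internal action τ, a label, or the success action ω. -/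
inductive Act : Type
  | tau : Act
  | lab : Label → Act
  | omega : Act

def Act.names : Act → Set Name
  | .tau => ∅
  | .lab ℓ => ℓ.names
  | .omega => ∅

/-- The labelled transition system. -/
inductive Step : Term → Act → Term → Prop
  | inp {a : Name} {x : ℕ} {k : ℕ} {Ts : Fin k → Term} (i : Fin k) (c : Name) :
      Step (.inp (.nm a) x k Ts) (.lab (.inp a c)) ((Ts i).subst1 x c)
  | out {a : Name} {k : ℕ} {ms : Fin k → NV} {Ts : Fin k → Term} (i : Fin k) {c : Name}
      (h : ms i = .nm c) :
      Step (.out (.nm a) k ms Ts) (.lab (.out a c)) (Ts i)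
  | sepInp {k : ℕ} {ns : Fin k → NV} {x : ℕ} {Ts : Fin k → Term} (i : Fin k) {a : Name}
      (h : ns i = .nm a) (c : Name) :
      Step (.sepInp k ns x Ts) (.lab (.inp a c)) ((Ts i).subst1 x c)
  | sepOut {k : ℕ} {ns ms : Fin k → NV} {Ts : Fin k → Term} (i : Fin k) {a c : Name}
      (h1 : ns i = .nm a) (h2 : ms i = .nm c) :
      Step (.sepOut k ns ms Ts) (.lab (.out a c)) (Ts i)
  | omegaStep : Step .omega .omega .nil
  | parR {S T T' : Term} {μ : Act} :
      Step T μ T' → Step (.par S T) μ (.par S T')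
  | parL {S S' T : Term} {μ : Act} :
      Step S μ S' → Step (.par S T) μ (.par S' T)
  | commL {S S' T T' : Term} {a b : Name} :
      Step S (.lab (.inp a b)) S' → Step T (.lab (.out a b)) T' →
      Step (.par S T) .tau (.par S' T')
  | commR {S S' T T' : Term} {a b : Name} :
      Step S (.lab (.out a b)) S' → Step T (.lab (.inp a b)) T' →
      Step (.par S T) .tau (.par S' T')
  | closeL {S S' T T' : Term} {a c : Name} :
      Step S (.lab (.inp a c)) S' → Step T (.lab (.bout a c)) T' →
      Step (.par S T) .tau (.res c (.par S' T'))
  | closeR {S S' T T' : Term} {a c : Name} :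
      Step S (.lab (.bout a c)) S' → Step T (.lab (.inp a c)) T' →
      Step (.par S T) .tau (.res c (.par S' T'))
  | open_ {T T' : Term} {a c : Name} :
      Step T (.lab (.out a c)) T' → Step (.res c T) (.lab (.bout a c)) T'
  | resStep {T T' : Term} {μ : Act} {c : Name} :
      Step T μ T' → c ∉ μ.names → Step (.res c T) μ (.res c T')
  | matStep {T T' : Term} {μ : Act} {a : Name} :
      Step T μ T' → Step (.mat (.nm a) (.nm a) T) μ T'
  | misStep {T T' : Term} {μ : Act} {a b : Name} :
      a ≠ b → Step T μ T' → Step (.mis (.nm a) (.nm b) T) μ T'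
  | repOutStep {a b : Name} {T : Term} :
      Step (.repOut (.nm a) (.nm b) T) (.lab (.out a b)) (.par T (.repOut (.nm a) (.nm b) T))
  | repInpStep {a : Name} {x : ℕ} {T : Term} (b : Name) :
      Step (.repInp (.nm a) x T) (.lab (.inp a b)) (.par (T.subst1 x b) (.repInp (.nm a) x T))

/-- Internal action. -/
def Tau (P Q : Term) : Prop := Step P .tau Q

/-- `P ⟹ Q`. -/
def WeakTau : Term → Term → Prop := Relation.ReflTransGen Tau

/-- `P ⇓` : observability (by external actions ℓ ∈ ℒ). -/
def Obs (P : Term) : Prop := ∃ P' ℓ P'', WeakTau P P' ∧ Step P' (.lab ℓ) P''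

abbrev PRel : Type := Term → Term → Prop

def OnPiProc (R : PRel) : Prop := ∀ P Q, R P Q → IsPiProc P ∧ IsPiProc Q

def ReflPiProc (R : PRel) : Prop := ∀ P, IsPiProc P → R P P

def Equipollent (R : PRel) : Prop := ∀ P Q, R P Q → (Obs P ↔ Obs Q)

def Extensional (R : PRel) : Prop :=
  (∀ L M P Q, R L M → R P Q → R (.par L P) (.par M Q)) ∧
  (∀ P Q c, R P Q → R (.res c P) (.res c Q))

/-- An infinite τ-sequence. -/
def TauSeq (f : ℕ → Term) : Prop := ∀ n, Tau (f n) (f (n + 1))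

/-- The action ω is immediately fireable. -/
def FiresOmega (P : Term) : Prop := ∃ P', Step P .omega P'

/-- A complete finite internal action sequence of `P`: a maximal finite
τ-sequence `f 0 = P, …, f n` with `f n` unable to do a τ-action. -/
def FinCompleteSeq (P : Term) (n : ℕ) (f : ℕ → Term) : Prop :=
  f 0 = P ∧ (∀ i < n, Tau (f i) (f (i + 1))) ∧ ∀ Q, ¬ Tau (f n) Q

/-- An infinite internal action sequence of `P`. -/
def InfSeq (P : Term) (f : ℕ → Term) : Prop := f 0 = P ∧ TauSeq f

/-- An observer: a closed term of the extended calculus (possibly with ω). -/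
def IsObserver (O : Term) : Prop := Closed O

/-- Some test (complete internal action sequence) of `P` is successful. -/
def MaySucceed (P : Term) : Prop :=
  (∃ n f, FinCompleteSeq P n f ∧ ∃ i ≤ n, FiresOmega (f i)) ∨
  (∃ f, InfSeq P f ∧ ∃ i, FiresOmega (f i))

/-- All tests (complete internal action sequences) of `P` are successful. -/
def MustSucceed (P : Term) : Prop :=
  (∀ n f, FinCompleteSeq P n f → ∃ i ≤ n, FiresOmega (f i)) ∧
  (∀ f, InfSeq P f → ∃ i, FiresOmega (f i))

/-- The may equivalence ≈_may. -/
def MayEq (P Q : Term) : Prop :=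
  ∀ O, IsObserver O → (MaySucceed (.par P O) ↔ MaySucceed (.par Q O))

/-- The must equivalence ≈_must. -/
def MustEq (P Q : Term) : Prop :=
  ∀ O, IsObserver O → (MustSucceed (.par P O) ↔ MustSucceed (.par Q O))

/-- `P` can perform the weak trace ℓ₁ ⋯ ℓₙ, i.e. `P ⟹ —ℓ₁→ ⟹ ⋯ ⟹ —ℓₙ→ ⟹`. -/
inductive HasTrace : Term → List Label → Prop
  | nil (P : Term) : HasTrace P []
  | cons {P P₁ P₂ : Term} {ℓ : Label} {ls : List Label} :
      WeakTau P P₁ → Step P₁ (.lab ℓ) P₂ → HasTrace P₂ ls → HasTrace P (ℓ :: ls)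

/-- One step by an arbitrary action. -/
def AnyStep (P Q : Term) : Prop := ∃ μ, Step P μ Q

/-- `Q` is a descendant of `P`. -/
def Descendant : Term → Term → Prop := Relation.ReflTransGen AnyStep

/-- A terminating process: no infinite internal action sequence. -/
def Terminating (P : Term) : Prop := ¬ ∃ f, InfSeq P f

/-- A strongly convergent process: all descendants are terminating. -/
def StronglyConvergent (P : Term) : Prop := ∀ Q, Descendant P Q → Terminating Q

/-- `P ⇊` : strong observability. -/
def StrongObs (P : Term) : Prop := ∀ P', WeakTau P P' → Obs P'

def StrongEquipollent (R : PRel) : Prop := ∀ P Q, R P Q → (StrongObs P ↔ StrongObs Q)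

def GoodBox (R : PRel) : Prop := OnPiProc R ∧ ReflPiProc R ∧ StrongEquipollent R ∧ Extensional R

/-- The box equality =_□ : the largest reflexive, strongly equipollent,
extensional relation on π-processes. -/
def BoxEq (P Q : Term) : Prop := ∃ R : PRel, GoodBox R ∧ R P Q

def GoodDia (R : PRel) : Prop := OnPiProc R ∧ ReflPiProc R ∧ Equipollent R ∧ Extensional R

/-- The diamond equality =_◇ : the largest reflexive, equipollent, extensional
relation on π-processes. -/
def DiamondEq (P Q : Term) : Prop := ∃ R : PRel, GoodDia R ∧ R P Q

namespace MustMay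
open Term

/-- No immediately fireable ω (syntactically). -/
def sil : Term → Prop
  | .par S T => sil S ∧ sil T
  | .res _ T => sil T
  | .mat p q T => p = q → sil T
  | .mis p q T => p ≠ q → sil T
  | .omega => False
  | _ => True

lemma step_omega_sil {T μ T'} (h : Step T μ T') : μ = .omega → ¬ sil T := by
  induction h <;> intro hμ <;> first
    | exact fun hs => by simp_all [sil]
    | simp_all [sil]

lemma sil_no_fire {T} (h : sil T) : ¬ FiresOmega T := by
  rintro ⟨T', hT'⟩; exact step_omega_sil hT' rfl h

lemma isPi_applyVar : ∀ (T : Term) (σ : ℕ → NV), T.isPi → (T.applyVar σ).isPi := by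
  intro T
  induction T <;> intro σ hT <;> simp_all [Term.isPi, Term.applyVar]

lemma isPi_subst1 {T : Term} (x c) (h : T.isPi) : (T.subst1 x c).isPi :=
  isPi_applyVar T _ h

lemma isPi_sil : ∀ (T : Term), T.isPi → sil T := by
  intro T
  induction T <;> simp_all [Term.isPi, sil]

lemma step_isPi {T μ T'} (h : Step T μ T') : T.isPi → T'.isPi ∧ μ ≠ .omega := by
  induction h <;> intro hT <;>
    simp_all [Term.isPi] <;>
    first
      | (constructor <;> first | (apply isPi_subst1; simp_all) | simp_all | tauto)
      | tauto
      | (apply isPi_subst1; simp_all)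

/-- Names of an NV. -/
def nvn : NV → Finset Name
  | .nm a => {a}
  | .vr _ => ∅

/-- Names occurring in a term (including binders). -/
def nms : Term → Finset Name
  | .nil => ∅
  | .inp n _ _ Ts => nvn n ∪ Finset.univ.biUnion fun i => nms (Ts i)
  | .out n _ ms Ts => nvn n ∪ (Finset.univ.biUnion fun i => nvn (ms i)) ∪
      Finset.univ.biUnion fun i => nms (Ts i)
  | .par S T => nms S ∪ nms T
  | .res c T => insert c (nms T)
  | .mat p q T => nvn p ∪ nvn q ∪ nms T
  | .mis p q T => nvn p ∪ nvn q ∪ nms T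
  | .repInp n _ T => nvn n ∪ nms T
  | .repOut n m T => nvn n ∪ nvn m ∪ nms T
  | .sepInp _ ns _ Ts => (Finset.univ.biUnion fun i => nvn (ns i)) ∪
      Finset.univ.biUnion fun i => nms (Ts i)
  | .sepOut _ ns ms Ts => (Finset.univ.biUnion fun i => nvn (ns i)) ∪
      (Finset.univ.biUnion fun i => nvn (ms i)) ∪
      Finset.univ.biUnion fun i => nms (Ts i)
  | .omega => ∅

def lnms : Label → Finset Name
  | .inp a b => {a, b}
  | .out a b => {a, b}
  | .bout a b => {a, b}

def anms : Act → Finset Name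
  | .tau => ∅
  | .lab l => lnms l
  | .omega => ∅

lemma nvn_sub {σ : ℕ → NV} {S : Finset Name} (h : ∀ y, nvn (σ y) ⊆ S) (v : NV) :
    nvn (v.sub σ) ⊆ nvn v ∪ S := by
  cases v with
  | nm a => simp [NV.sub]
  | vr x => exact (h x).trans (Finset.subset_union_right)

lemma nms_applyVar {S : Finset Name} :
    ∀ (T : Term) (σ : ℕ → NV), (∀ y, nvn (σ y) ⊆ S) → nms (T.applyVar σ) ⊆ nms T ∪ S := by
  intro T
  induction T with
  | nil => intro σ h; simp [Term.applyVar, nms]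
  | omega => intro σ h; simp [Term.applyVar, nms]
  | inp n x k Ts ih =>
    intro σ h
    have hup : ∀ y, nvn ((Function.update σ x (NV.vr x)) y) ⊆ S := by
      intro y; by_cases hy : y = x <;> simp [hy, Function.update, nvn] <;> exact h y
    simp only [Term.applyVar, nms]
    intro a ha
    simp only [Finset.mem_union, Finset.mem_biUnion, Finset.mem_univ, true_and] at ha ⊢
    rcases ha with ha | ⟨i, ha⟩
    · rcases Finset.mem_union.1 (nvn_sub h n ha) with h' | h'
      · exact Or.inl (Or.inl h')
      · exact Or.inr h'
    · rcases Finset.mem_union.1 (ih i _ hup ha) with h' | h'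
      · exact Or.inl (Or.inr ⟨i, h'⟩)
      · exact Or.inr h'
  | out n k ms Ts ih =>
    intro σ h
    simp only [Term.applyVar, nms]
    intro a ha
    simp only [Finset.mem_union, Finset.mem_biUnion, Finset.mem_univ, true_and] at ha ⊢
    rcases ha with ((ha | ⟨i, ha⟩) | ⟨i, ha⟩)
    · rcases Finset.mem_union.1 (nvn_sub h n ha) with h' | h' <;> tauto
    · rcases Finset.mem_union.1 (nvn_sub h (ms i) ha) with h' | h' <;> tauto
    · rcases Finset.mem_union.1 (ih i σ h ha) with h' | h' <;> tauto
  | par S T ihS ihT =>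
    intro σ h
    simp only [Term.applyVar, nms]
    intro a ha
    simp only [Finset.mem_union] at ha ⊢
    rcases ha with ha | ha
    · rcases Finset.mem_union.1 (ihS σ h ha) with h' | h' <;> tauto
    · rcases Finset.mem_union.1 (ihT σ h ha) with h' | h' <;> tauto
  | res c T ih =>
    intro σ h
    simp only [Term.applyVar, nms]
    intro a ha
    simp only [Finset.mem_insert, Finset.mem_union] at ha ⊢
    rcases ha with ha | ha
    · tauto
    · rcases Finset.mem_union.1 (ih σ h ha) with h' | h' <;> tauto
  | mat p q T ih =>
    intro σ h
    simp only [Term.applyVar, nms]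
    intro a ha
    simp only [Finset.mem_union] at ha ⊢
    rcases ha with ((ha | ha) | ha)
    · rcases Finset.mem_union.1 (nvn_sub h p ha) with h' | h' <;> tauto
    · rcases Finset.mem_union.1 (nvn_sub h q ha) with h' | h' <;> tauto
    · rcases Finset.mem_union.1 (ih σ h ha) with h' | h' <;> tauto
  | mis p q T ih =>
    intro σ h
    simp only [Term.applyVar, nms]
    intro a ha
    simp only [Finset.mem_union] at ha ⊢
    rcases ha with ((ha | ha) | ha)
    · rcases Finset.mem_union.1 (nvn_sub h p ha) with h' | h' <;> tauto
    · rcases Finset.mem_union.1 (nvn_sub h q ha) with h' | h' <;> tauto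
    · rcases Finset.mem_union.1 (ih σ h ha) with h' | h' <;> tauto
  | repInp n x T ih =>
    intro σ h
    have hup : ∀ y, nvn ((Function.update σ x (NV.vr x)) y) ⊆ S := by
      intro y; by_cases hy : y = x <;> simp [hy, Function.update, nvn] <;> exact h y
    simp only [Term.applyVar, nms]
    intro a ha
    simp only [Finset.mem_union] at ha ⊢
    rcases ha with ha | ha
    · rcases Finset.mem_union.1 (nvn_sub h n ha) with h' | h' <;> tauto
    · rcases Finset.mem_union.1 (ih _ hup ha) with h' | h' <;> tauto
  | repOut n m T ih =>
    intro σ h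
    simp only [Term.applyVar, nms]
    intro a ha
    simp only [Finset.mem_union] at ha ⊢
    rcases ha with ((ha | ha) | ha)
    · rcases Finset.mem_union.1 (nvn_sub h n ha) with h' | h' <;> tauto
    · rcases Finset.mem_union.1 (nvn_sub h m ha) with h' | h' <;> tauto
    · rcases Finset.mem_union.1 (ih σ h ha) with h' | h' <;> tauto
  | sepInp k ns x Ts ih =>
    intro σ h
    have hup : ∀ y, nvn ((Function.update σ x (NV.vr x)) y) ⊆ S := by
      intro y; by_cases hy : y = x <;> simp [hy, Function.update, nvn] <;> exact h y
    simp only [Term.applyVar, nms]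
    intro a ha
    simp only [Finset.mem_union, Finset.mem_biUnion, Finset.mem_univ, true_and] at ha ⊢
    rcases ha with ⟨i, ha⟩ | ⟨i, ha⟩
    · rcases Finset.mem_union.1 (nvn_sub h (ns i) ha) with h' | h' <;> tauto
    · rcases Finset.mem_union.1 (ih i _ hup ha) with h' | h' <;> tauto
  | sepOut k ns ms Ts ih =>
    intro σ h
    simp only [Term.applyVar, nms]
    intro a ha
    simp only [Finset.mem_union, Finset.mem_biUnion, Finset.mem_univ, true_and] at ha ⊢
    rcases ha with (⟨i, ha⟩ | ⟨i, ha⟩) | ⟨i, ha⟩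
    · rcases Finset.mem_union.1 (nvn_sub h (ns i) ha) with h' | h' <;> tauto
    · rcases Finset.mem_union.1 (nvn_sub h (ms i) ha) with h' | h' <;> tauto
    · rcases Finset.mem_union.1 (ih i σ h ha) with h' | h' <;> tauto

lemma nms_subst1 {T : Term} {x : ℕ} {c : Name} :
    nms (T.subst1 x c) ⊆ insert c (nms T) := by
  have h : ∀ y, nvn ((fun y => if y = x then NV.nm c else NV.vr y) y) ⊆ ({c} : Finset Name) := by
    intro y; by_cases hy : y = x <;> simp [hy, nvn]
  have := nms_applyVar T _ h
  intro a ha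
  have := this ha
  simp only [Finset.mem_union, Finset.mem_singleton, Finset.mem_insert] at this ⊢
  tauto
lemma step_subj {T μ T'} (h : Step T μ T') : ∀ a b,
    (μ = .lab (.inp a b) → a ∈ nms T) ∧
    (μ = .lab (.out a b) → a ∈ nms T ∧ b ∈ nms T) ∧
    (μ = .lab (.bout a b) → a ∈ nms T ∧ b ∈ nms T) := by
  induction h with
  | @inp a x k Ts i c =>
    intro a' b'; refine ⟨fun h => ?_, fun h => ?_, fun h => ?_⟩ <;> simp_all [nms, nvn]
  | @out a k ms Ts i c hms =>
    intro a' b'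
    refine ⟨fun h => by simp_all, fun h => ?_, fun h => by simp_all⟩
    obtain ⟨rfl, rfl⟩ : a = a' ∧ c = b' := by simpa using h
    refine ⟨by simp [nms, nvn], ?_⟩
    simp only [nms, Finset.mem_union]
    exact Or.inl (Or.inr (Finset.mem_biUnion.2 ⟨i, Finset.mem_univ i, by simp [hms, nvn]⟩))
  | @sepInp k ns x Ts i a hns c =>
    intro a' b'
    refine ⟨fun h => ?_, fun h => by simp_all, fun h => by simp_all⟩
    obtain ⟨rfl, rfl⟩ : a = a' ∧ c = b' := by simpa using h
    simp only [nms, Finset.mem_union]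
    exact Or.inl (Finset.mem_biUnion.2 ⟨i, Finset.mem_univ i, by simp [hns, nvn]⟩)
  | @sepOut k ns ms Ts i a c h1 h2 =>
    intro a' b'
    refine ⟨fun h => by simp_all, fun h => ?_, fun h => by simp_all⟩
    obtain ⟨rfl, rfl⟩ : a = a' ∧ c = b' := by simpa using h
    simp only [nms, Finset.mem_union]
    exact ⟨Or.inl (Or.inl (Finset.mem_biUnion.2 ⟨i, Finset.mem_univ i, by simp [h1, nvn]⟩)),
      Or.inl (Or.inr (Finset.mem_biUnion.2 ⟨i, Finset.mem_univ i, by simp [h2, nvn]⟩))⟩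
  | omegaStep => intro a' b'; refine ⟨fun h => ?_, fun h => ?_, fun h => ?_⟩ <;> simp_all
  | @parR S T T' μ h ih =>
    intro a' b'
    refine ⟨fun h' => ?_, fun h' => ?_, fun h' => ?_⟩ <;> simp_all [nms] <;> tauto
  | @parL S S' T μ h ih =>
    intro a' b'
    refine ⟨fun h' => ?_, fun h' => ?_, fun h' => ?_⟩ <;> simp_all [nms] <;> tauto
  | commL _ _ => intro a' b'; refine ⟨fun h => ?_, fun h => ?_, fun h => ?_⟩ <;> simp_all
  | commR _ _ => intro a' b'; refine ⟨fun h => ?_, fun h => ?_, fun h => ?_⟩ <;> simp_all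
  | closeL _ _ => intro a' b'; refine ⟨fun h => ?_, fun h => ?_, fun h => ?_⟩ <;> simp_all
  | closeR _ _ => intro a' b'; refine ⟨fun h => ?_, fun h => ?_, fun h => ?_⟩ <;> simp_all
  | @open_ T T' a c h ih =>
    intro a' b'
    refine ⟨fun h' => ?_, fun h' => ?_, fun h' => ?_⟩ <;> simp_all [nms]
  | @resStep T T' μ c h hc ih =>
    intro a' b'
    refine ⟨fun h' => ?_, fun h' => ?_, fun h' => ?_⟩ <;> simp_all [nms] <;> tauto
  | @matStep T T' μ a h ih =>
    intro a' b'
    refine ⟨fun h' => ?_, fun h' => ?_, fun h' => ?_⟩ <;> simp_all [nms] <;> tauto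
  | @misStep T T' μ a b hab h ih =>
    intro a' b'
    refine ⟨fun h' => ?_, fun h' => ?_, fun h' => ?_⟩ <;> simp_all [nms] <;> tauto
  | @repOutStep a b T =>
    intro a' b'; refine ⟨fun h => ?_, fun h => ?_, fun h => ?_⟩ <;> simp_all [nms, nvn]
  | @repInpStep a x T b =>
    intro a' b'; refine ⟨fun h => ?_, fun h => ?_, fun h => ?_⟩ <;> simp_all [nms, nvn]

lemma step_out_mem {T T' a b} (h : Step T (.lab (.out a b)) T') :
    a ∈ nms T ∧ b ∈ nms T := (step_subj h a b).2.1 rfl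

lemma step_bout_mem {T T' a b} (h : Step T (.lab (.bout a b)) T') :
    a ∈ nms T ∧ b ∈ nms T := (step_subj h a b).2.2 rfl

lemma step_inp_mem {T T' a b} (h : Step T (.lab (.inp a b)) T') :
    a ∈ nms T := (step_subj h a b).1 rfl
set_option maxHeartbeats 1600000

lemma step_nms {T μ T'} (h : Step T μ T') : nms T' ⊆ nms T ∪ anms μ := by
  induction h with
  | @inp a x k Ts i c =>
    refine nms_subst1.trans ?_
    intro m hm
    simp only [Finset.mem_insert, nms, anms, lnms, Finset.mem_union, Finset.mem_biUnion,
      Finset.mem_univ, true_and, Finset.mem_singleton, Finset.mem_insert] at hm ⊢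
    rcases hm with rfl | hm
    · tauto
    · exact Or.inl (Or.inr ⟨i, hm⟩)
  | @out a k ms Ts i c hms =>
    intro m hm
    simp only [nms, Finset.mem_union, Finset.mem_biUnion, Finset.mem_univ, true_and] at hm ⊢
    exact Or.inl (Or.inr ⟨i, hm⟩)
  | @sepInp k ns x Ts i a hns c =>
    refine nms_subst1.trans ?_
    intro m hm
    simp only [Finset.mem_insert, nms, anms, lnms, Finset.mem_union, Finset.mem_biUnion,
      Finset.mem_univ, true_and, Finset.mem_singleton, Finset.mem_insert] at hm ⊢
    rcases hm with rfl | hm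
    · tauto
    · exact Or.inl (Or.inr ⟨i, hm⟩)
  | @sepOut k ns ms Ts i a c h1 h2 =>
    intro m hm
    simp only [nms, Finset.mem_union, Finset.mem_biUnion, Finset.mem_univ, true_and] at hm ⊢
    exact Or.inl (Or.inr ⟨i, hm⟩)
  | omegaStep => simp [nms]
  | @parR S T T' μ h ih =>
    intro m hm
    simp only [nms, Finset.mem_union] at hm ⊢
    rcases hm with hm | hm
    · tauto
    · rcases Finset.mem_union.1 (ih hm) with h' | h' <;> tauto
  | @parL S S' T μ h ih =>
    intro m hm
    simp only [nms, Finset.mem_union] at hm ⊢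
    rcases hm with hm | hm
    · rcases Finset.mem_union.1 (ih hm) with h' | h' <;> tauto
    · tauto
  | @commL S S' T T' a b hS hT ihS ihT =>
    intro m hm
    have hab := step_out_mem hT
    simp only [nms, anms, Finset.mem_union] at hm ⊢
    rcases hm with hm | hm
    · rcases Finset.mem_union.1 (ihS hm) with h' | h'
      · tauto
      · simp only [anms, lnms, Finset.mem_insert, Finset.mem_singleton] at h'
        rcases h' with rfl | rfl <;> tauto
    · rcases Finset.mem_union.1 (ihT hm) with h' | h'
      · tauto
      · simp only [anms, lnms, Finset.mem_insert, Finset.mem_singleton] at h'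
        rcases h' with rfl | rfl <;> tauto
  | @commR S S' T T' a b hS hT ihS ihT =>
    intro m hm
    have hab := step_out_mem hS
    simp only [nms, anms, Finset.mem_union] at hm ⊢
    rcases hm with hm | hm
    · rcases Finset.mem_union.1 (ihS hm) with h' | h'
      · tauto
      · simp only [anms, lnms, Finset.mem_insert, Finset.mem_singleton] at h'
        rcases h' with rfl | rfl <;> tauto
    · rcases Finset.mem_union.1 (ihT hm) with h' | h'
      · tauto
      · simp only [anms, lnms, Finset.mem_insert, Finset.mem_singleton] at h'
        rcases h' with rfl | rfl <;> tauto
  | @closeL S S' T T' a c hS hT ihS ihT =>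
    intro m hm
    have hab := step_bout_mem hT
    simp only [nms, anms, Finset.mem_union, Finset.mem_insert] at hm ⊢
    rcases hm with rfl | (hm | hm)
    · tauto
    · rcases Finset.mem_union.1 (ihS hm) with h' | h'
      · tauto
      · simp only [anms, lnms, Finset.mem_insert, Finset.mem_singleton] at h'
        rcases h' with rfl | rfl <;> tauto
    · rcases Finset.mem_union.1 (ihT hm) with h' | h'
      · tauto
      · simp only [anms, lnms, Finset.mem_insert, Finset.mem_singleton] at h'
        rcases h' with rfl | rfl <;> tauto
  | @closeR S S' T T' a c hS hT ihS ihT =>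
    intro m hm
    have hab := step_bout_mem hS
    simp only [nms, anms, Finset.mem_union, Finset.mem_insert] at hm ⊢
    rcases hm with rfl | (hm | hm)
    · tauto
    · rcases Finset.mem_union.1 (ihS hm) with h' | h'
      · tauto
      · simp only [anms, lnms, Finset.mem_insert, Finset.mem_singleton] at h'
        rcases h' with rfl | rfl <;> tauto
    · rcases Finset.mem_union.1 (ihT hm) with h' | h'
      · tauto
      · simp only [anms, lnms, Finset.mem_insert, Finset.mem_singleton] at h'
        rcases h' with rfl | rfl <;> tauto
  | @open_ T T' a c h ih =>
    intro m hm
    rcases Finset.mem_union.1 (ih hm) with h' | h'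
    · simp only [nms, Finset.mem_union, Finset.mem_insert]; tauto
    · simp only [anms, lnms, Finset.mem_insert, Finset.mem_singleton] at h'
      simp only [nms, anms, lnms, Finset.mem_union, Finset.mem_insert, Finset.mem_singleton]
      tauto
  | @resStep T T' μ c h hc ih =>
    intro m hm
    simp only [nms, Finset.mem_union, Finset.mem_insert] at hm ⊢
    rcases hm with rfl | hm
    · tauto
    · rcases Finset.mem_union.1 (ih hm) with h' | h' <;> tauto
  | @matStep T T' μ a h ih =>
    intro m hm
    rcases Finset.mem_union.1 (ih hm) with h' | h' <;>
      simp only [nms, Finset.mem_union] <;> tauto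
  | @misStep T T' μ a b hab h ih =>
    intro m hm
    rcases Finset.mem_union.1 (ih hm) with h' | h' <;>
      simp only [nms, Finset.mem_union] <;> tauto
  | @repOutStep a b T =>
    intro m hm
    simp only [nms, Finset.mem_union] at hm ⊢
    tauto
  | @repInpStep a x T b =>
    intro m hm
    simp only [nms, Finset.mem_union] at hm
    rcases hm with hm | hm
    · have := nms_subst1 hm
      simp only [Finset.mem_insert] at this
      simp only [nms, anms, lnms, Finset.mem_union, Finset.mem_insert, Finset.mem_singleton]
      tauto
    · simp only [nms, Finset.mem_union] at hm ⊢
      tauto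

lemma tauStep_nms {T T'} (h : Tau T T') : nms T' ⊆ nms T := by
  have := step_nms h
  simpa [anms] using this

lemma weakTau_nms {T T'} (h : WeakTau T T') : nms T' ⊆ nms T := by
  induction h with
  | refl => exact Finset.Subset.refl _
  | tail _ h ih => exact (tauStep_nms h).trans ih
lemma sub_id {v : NV} {σ} (h : ∀ x ∈ v.vars, σ x = NV.vr x) : v.sub σ = v := by
  cases v with
  | nm a => rfl
  | vr x => exact h x (by simp [NV.vars])

lemma applyVar_id : ∀ (T : Term) (σ), (∀ x ∈ T.fvar, σ x = NV.vr x) → T.applyVar σ = T := by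
  intro T
  induction T with
  | nil => intro σ h; rfl
  | omega => intro σ h; rfl
  | inp n x k Ts ih =>
    intro σ h
    simp only [Term.applyVar, Term.inp.injEq, heq_eq_eq, true_and]
    refine ⟨sub_id fun y hy => h y (by simp [Term.fvar]; tauto), funext fun i => ?_⟩
    refine ih i _ fun y hy => ?_
    by_cases hyx : y = x
    · simp [hyx, Function.update]
    · rw [Function.update_of_ne hyx]
      exact h y (by simp only [Term.fvar, Set.mem_union, Set.mem_diff, Set.mem_iUnion,
        Set.mem_singleton_iff]; exact Or.inr ⟨⟨i, hy⟩, hyx⟩)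
  | out n k ms Ts ih =>
    intro σ h
    simp only [Term.applyVar, Term.out.injEq, heq_eq_eq, true_and]
    refine ⟨sub_id fun y hy => h y (by simp [Term.fvar]; tauto), funext fun i => ?_,
      funext fun i => ?_⟩
    · refine sub_id fun y hy => h y ?_
      simp only [Term.fvar, Set.mem_union, Set.mem_iUnion]
      exact Or.inr ⟨i, Or.inl hy⟩
    · refine ih i _ fun y hy => h y ?_
      simp only [Term.fvar, Set.mem_union, Set.mem_iUnion]
      exact Or.inr ⟨i, Or.inr hy⟩
  | par S T ihS ihT =>
    intro σ h
    simp only [Term.applyVar, Term.par.injEq]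
    exact ⟨ihS _ fun y hy => h y (by simp [Term.fvar]; tauto),
      ihT _ fun y hy => h y (by simp [Term.fvar]; tauto)⟩
  | res c T ih =>
    intro σ h
    simp only [Term.applyVar, Term.res.injEq, true_and]
    exact ih _ fun y hy => h y (by simpa [Term.fvar] using hy)
  | mat p q T ih =>
    intro σ h
    simp only [Term.applyVar, Term.mat.injEq]
    exact ⟨sub_id fun y hy => h y (by simp [Term.fvar]; tauto),
      sub_id fun y hy => h y (by simp [Term.fvar]; tauto),
      ih _ fun y hy => h y (by simp [Term.fvar]; tauto)⟩
  | mis p q T ih =>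
    intro σ h
    simp only [Term.applyVar, Term.mis.injEq]
    exact ⟨sub_id fun y hy => h y (by simp [Term.fvar]; tauto),
      sub_id fun y hy => h y (by simp [Term.fvar]; tauto),
      ih _ fun y hy => h y (by simp [Term.fvar]; tauto)⟩
  | repInp n x T ih =>
    intro σ h
    simp only [Term.applyVar, Term.repInp.injEq, true_and]
    refine ⟨sub_id fun y hy => h y (by simp [Term.fvar]; tauto), ?_⟩
    refine ih _ fun y hy => ?_
    by_cases hyx : y = x
    · simp [hyx, Function.update]
    · rw [Function.update_of_ne hyx]
      refine h y ?_
      simp only [Term.fvar, Set.mem_union, Set.mem_diff, Set.mem_singleton_iff]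
      exact Or.inr ⟨hy, hyx⟩
  | repOut n m T ih =>
    intro σ h
    simp only [Term.applyVar, Term.repOut.injEq]
    exact ⟨sub_id fun y hy => h y (by simp [Term.fvar]; tauto),
      sub_id fun y hy => h y (by simp [Term.fvar]; tauto),
      ih _ fun y hy => h y (by simp [Term.fvar]; tauto)⟩
  | sepInp k ns x Ts ih =>
    intro σ h
    simp only [Term.applyVar, Term.sepInp.injEq, heq_eq_eq, true_and]
    refine ⟨funext fun i => sub_id fun y hy => h y (by
        simp only [Term.fvar, Set.mem_union, Set.mem_iUnion]; exact Or.inl ⟨i, hy⟩),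
      funext fun i => ?_⟩
    refine ih i _ fun y hy => ?_
    by_cases hyx : y = x
    · simp [hyx, Function.update]
    · rw [Function.update_of_ne hyx]
      exact h y (by simp only [Term.fvar, Set.mem_union, Set.mem_diff, Set.mem_iUnion,
        Set.mem_singleton_iff]; exact Or.inr ⟨⟨i, hy⟩, hyx⟩)
  | sepOut k ns ms Ts ih =>
    intro σ h
    simp only [Term.applyVar, Term.sepOut.injEq, heq_eq_eq, true_and]
    refine ⟨funext fun i => sub_id fun y hy => h y (by
        simp only [Term.fvar, Set.mem_iUnion, Set.mem_union]; exact ⟨i, Or.inl (Or.inl hy)⟩),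
      funext fun i => sub_id fun y hy => h y (by
        simp only [Term.fvar, Set.mem_iUnion, Set.mem_union]; exact ⟨i, Or.inl (Or.inr hy)⟩),
      funext fun i => ih i _ fun y hy => h y (by
        simp only [Term.fvar, Set.mem_iUnion, Set.mem_union]; exact ⟨i, Or.inr hy⟩)⟩

lemma subst1_closed {T : Term} (hT : Closed T) (x c) : T.subst1 x c = T := by
  refine applyVar_id T _ fun y hy => ?_
  rw [Closed] at hT
  simp [hT] at hy
/-- A list of restrictions. -/
def rl : List Name → Term → Term
  | [], T => T
  | c :: cs, T => .res c (rl cs T)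

lemma rl_snoc (cs : List Name) (c : Name) (T : Term) :
    rl cs (.res c T) = rl (cs ++ [c]) T := by
  induction cs with
  | nil => rfl
  | cons d cs ih => simp [rl, ih]

lemma tau_rl {X Y} (h : Tau X Y) (cs : List Name) : Tau (rl cs X) (rl cs Y) := by
  induction cs with
  | nil => exact h
  | cons c cs ih => exact Step.resStep ih (by simp [Act.names])

lemma omega_rl {X Y} (h : Step X .omega Y) (cs : List Name) :
    Step (rl cs X) .omega (rl cs Y) := by
  induction cs with
  | nil => exact h
  | cons c cs ih => exact Step.resStep ih (by simp [Act.names])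

lemma fires_rl {X} (h : FiresOmega X) (cs : List Name) : FiresOmega (rl cs X) := by
  obtain ⟨X', h⟩ := h; exact ⟨_, omega_rl h cs⟩

lemma fires_parL {S T} (h : FiresOmega S) : FiresOmega (.par S T) := by
  obtain ⟨S', h⟩ := h; exact ⟨_, Step.parL h⟩

lemma fires_parR {S T} (h : FiresOmega T) : FiresOmega (.par S T) := by
  obtain ⟨T', h⟩ := h; exact ⟨_, Step.parR h⟩

lemma fires_res {c T} (h : FiresOmega T) : FiresOmega (.res c T) := by
  obtain ⟨T', h⟩ := h; exact ⟨_, Step.resStep h (by simp [Act.names])⟩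

lemma tau_res_inv {c X Y} (h : Tau (.res c X) Y) : ∃ X', Tau X X' ∧ Y = .res c X' := by
  cases h with
  | resStep h hc => exact ⟨_, h, rfl⟩

lemma tau_rl_inv : ∀ (cs : List Name) {X Y}, Tau (rl cs X) Y →
    ∃ X', Tau X X' ∧ Y = rl cs X' := by
  intro cs
  induction cs with
  | nil => exact fun h => ⟨_, h, rfl⟩
  | cons c cs ih =>
    intro X Y h
    obtain ⟨W, hW, rfl⟩ := tau_res_inv h
    obtain ⟨X', hX', rfl⟩ := ih hW
    exact ⟨X', hX', rfl⟩

lemma omega_res_inv {c X Y} (h : Step (.res c X) .omega Y) : ∃ X', Step X .omega X' := by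
  cases h with
  | resStep h hc => exact ⟨_, h⟩

lemma omega_rl_inv : ∀ (cs : List Name) {X}, FiresOmega (rl cs X) → FiresOmega X := by
  intro cs
  induction cs with
  | nil => exact fun h => h
  | cons c cs ih =>
    rintro X ⟨Y, h⟩
    obtain ⟨X', h⟩ := omega_res_inv h
    exact ih ⟨_, h⟩

lemma weakTau_parL {S S' : Term} (T : Term) (h : WeakTau S S') :
    WeakTau (.par S T) (.par S' T) := by
  induction h with
  | refl => exact Relation.ReflTransGen.refl
  | tail _ h ih => exact ih.tail (Step.parL h)

lemma weakTau_parR {S : Term} {T T' : Term} (h : WeakTau T T') :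
    WeakTau (.par S T) (.par S T') := by
  induction h with
  | refl => exact Relation.ReflTransGen.refl
  | tail _ h ih => exact ih.tail (Step.parR h)

lemma weakTau_rl {X Y} (cs : List Name) (h : WeakTau X Y) :
    WeakTau (rl cs X) (rl cs Y) := by
  induction h with
  | refl => exact Relation.ReflTransGen.refl
  | tail _ h ih => exact ih.tail (tau_rl h cs)

/-- Finite τ-path predicate on an indexed sequence. -/
def FinPath (f : ℕ → Term) (n : ℕ) : Prop := ∀ i < n, Tau (f i) (f (i + 1))

lemma finPath_weakTau {f : ℕ → Term} : ∀ {n}, FinPath f n → WeakTau (f 0) (f n) := by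
  intro n
  induction n with
  | zero => exact fun _ => Relation.ReflTransGen.refl
  | succ n ih =>
    intro h
    exact (ih fun i hi => h i (by omega)).tail (h n (by omega))

lemma weakTau_finPath {X Z} (h : WeakTau X Z) :
    ∃ n f, f 0 = X ∧ f n = Z ∧ FinPath f n := by
  induction h with
  | refl => exact ⟨0, fun _ => X, rfl, rfl, fun i hi => by omega⟩
  | @tail Y Z _ hYZ ih =>
    obtain ⟨n, f, h0, hn, hp⟩ := ih
    refine ⟨n + 1, fun i => if i ≤ n then f i else Z, by simpa using h0, by simp, ?_⟩
    intro i hi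
    by_cases hin : i < n
    · have h1 : i ≤ n := by omega
      have h2 : i + 1 ≤ n := by omega
      simpa [h1, h2] using hp i hin
    · have : i = n := by omega
      subst this
      simp [hn, hYZ]

/-- Glue two indexed sequences at position `n`. -/
def glue (f : ℕ → Term) (n : ℕ) (g : ℕ → Term) : ℕ → Term :=
  fun i => if i ≤ n then f i else g (i - n)

lemma glue_le {f n g} {i : ℕ} (h : i ≤ n) : glue f n g i = f i := by simp [glue, h]

lemma glue_add {f n g} (hg0 : g 0 = f n) (j : ℕ) : glue f n g (n + j) = g j := by
  cases j with
  | zero => simp [glue, hg0]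
  | succ j =>
    have h1 : ¬ (n + (j + 1) ≤ n) := by omega
    simp [glue, h1, Nat.add_sub_cancel_left]

lemma glue_tau {f : ℕ → Term} {n : ℕ} {g : ℕ → Term} {m : ℕ} (hg0 : g 0 = f n)
    (hf : FinPath f n) (hg : ∀ j < m, Tau (g j) (g (j + 1))) :
    ∀ i < n + m, Tau (glue f n g i) (glue f n g (i + 1)) := by
  intro i hi
  by_cases hin : i < n
  · rw [glue_le (by omega), glue_le (by omega)]
    exact hf i hin
  · obtain ⟨j, rfl⟩ : ∃ j, i = n + j := ⟨i - n, by omega⟩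
    rw [glue_add hg0, show n + j + 1 = n + (j + 1) by omega, glue_add hg0]
    exact hg j (by omega)

lemma may_of_reach {X Z} (hw : WeakTau X Z) (hfire : FiresOmega Z) : MaySucceed X := by
  classical
  obtain ⟨n, f, h0, hn, hp⟩ := weakTau_finPath hw
  let g : ℕ → Term := fun k =>
    Nat.rec Z (fun _ prev => if h : ∃ Y, Tau prev Y then h.choose else prev) k
  have hg0 : g 0 = Z := rfl
  have hgsucc : ∀ k, g (k + 1) = if h : ∃ Y, Tau (g k) Y then h.choose else g k := fun k => rfl
  have hgtau : ∀ k, (∃ Y, Tau (g k) Y) → Tau (g k) (g (k + 1)) := by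
    intro k hk
    rw [hgsucc k, dif_pos hk]
    exact hk.choose_spec
  have hg0' : g 0 = f n := by rw [hg0, hn]
  by_cases hstuck : ∃ m, ¬ ∃ Y, Tau (g m) Y
  · left
    have hEx : ∃ m, ¬ ∃ Y, Tau (g m) Y := hstuck
    have hmin := Nat.find_spec hEx
    set m₀ := Nat.find hEx with hm₀
    refine ⟨n + m₀, glue f n g, ⟨by rw [glue_le (by omega), h0], ?_, ?_⟩, n, by omega, ?_⟩
    · refine glue_tau hg0' hp fun j hj => hgtau j ?_
      by_contra hc
      have h2 : j < Nat.find hEx := by rw [← hm₀]; exact hj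
      exact Nat.find_min hEx h2 hc
    · intro Y hY
      rw [glue_add hg0'] at hY
      exact hmin ⟨Y, hY⟩
    · rw [glue_le (le_refl n), hn]; exact hfire
  · push_neg at hstuck
    right
    refine ⟨glue f n g, ⟨by rw [glue_le (by omega), h0], ?_⟩, n, ?_⟩
    · intro i
      by_cases hin : i < n
      · rw [glue_le (by omega), glue_le (by omega)]
        exact hp i hin
      · obtain ⟨j, rfl⟩ : ∃ j, i = n + j := ⟨i - n, by omega⟩
        rw [glue_add hg0', show n + j + 1 = n + (j + 1) by omega, glue_add hg0']
        exact hgtau j (hstuck j)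
    · rw [glue_le (le_refl n), hn]; exact hfire

lemma reach_of_may {X} (h : MaySucceed X) : ∃ Z, WeakTau X Z ∧ FiresOmega Z := by
  rcases h with ⟨n, f, ⟨h0, hs, _⟩, i, hin, hfire⟩ | ⟨f, ⟨h0, hs⟩, i, hfire⟩
  · exact ⟨f i, h0 ▸ finPath_weakTau (fun j hj => hs j (by omega)), hfire⟩
  · exact ⟨f i, h0 ▸ finPath_weakTau (fun j hj => hs j), hfire⟩

lemma may_iff {X} : MaySucceed X ↔ ∃ Z, WeakTau X Z ∧ FiresOmega Z :=
  ⟨reach_of_may, fun ⟨Z, hw, hf⟩ => may_of_reach hw hf⟩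
/-- `Tr P s P'` : `P` performs the weak trace `s` ending in `P'`. -/
inductive Tr : Term → List Label → Term → Prop
  | nil (P) : Tr P [] P
  | tau {P P₁ s P'} : Tau P P₁ → Tr P₁ s P' → Tr P s P'
  | lab {P P₁ s P' ℓ} : Step P (.lab ℓ) P₁ → Tr P₁ s P' → Tr P (ℓ :: s) P'

/-- Complementary step of an observer against the trace label of the process. -/
def CoStep : Label → Term → Term → Prop
  | .inp a b, B, B' => Step B (.lab (.out a b)) B' ∨ Step B (.lab (.bout a b)) B'
  | .out a b, B, B' => Step B (.lab (.inp a b)) B'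
  | .bout a b, B, B' => Step B (.lab (.inp a b)) B'

/-- `CoTr O s O'` : `O` co-performs the trace `s`. -/
inductive CoTr : Term → List Label → Term → Prop
  | nil (B) : CoTr B [] B
  | tau {B B₁ s B'} : Tau B B₁ → CoTr B₁ s B' → CoTr B s B'
  | lab {B B₁ s B' ℓ} : CoStep ℓ B B₁ → CoTr B₁ s B' → CoTr B (ℓ :: s) B'

lemma Tr.snocTau : ∀ {P s P' P''}, Tr P s P' → Tau P' P'' → Tr P s P'' := by
  intro P s P' P'' h h'
  induction h with
  | nil => exact Tr.tau h' (Tr.nil _)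
  | tau h₁ _ ih => exact Tr.tau h₁ (ih h')
  | lab h₁ _ ih => exact Tr.lab h₁ (ih h')

lemma Tr.snocLab : ∀ {P s P' ℓ P''}, Tr P s P' → Step P' (.lab ℓ) P'' → Tr P (s ++ [ℓ]) P'' := by
  intro P s P' ℓ P'' h h'
  induction h with
  | nil => exact Tr.lab h' (Tr.nil _)
  | tau h₁ _ ih => exact Tr.tau h₁ (ih h')
  | lab h₁ _ ih => exact Tr.lab h₁ (ih h')

lemma CoTr.snocTau : ∀ {B s B' B''}, CoTr B s B' → Tau B' B'' → CoTr B s B'' := by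
  intro B s B' B'' h h'
  induction h with
  | nil => exact CoTr.tau h' (CoTr.nil _)
  | tau h₁ _ ih => exact CoTr.tau h₁ (ih h')
  | lab h₁ _ ih => exact CoTr.lab h₁ (ih h')

lemma CoTr.snocLab : ∀ {B s B' ℓ B''}, CoTr B s B' → CoStep ℓ B' B'' →
    CoTr B (s ++ [ℓ]) B'' := by
  intro B s B' ℓ B'' h h'
  induction h with
  | nil => exact CoTr.lab h' (CoTr.nil _)
  | tau h₁ _ ih => exact CoTr.tau h₁ (ih h')
  | lab h₁ _ ih => exact CoTr.lab h₁ (ih h')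

/-- Decomposition of internal runs of a composition. -/
lemma decomp {P O Z} (h : WeakTau (.par P O) Z) :
    ∃ cs s P' O', Z = rl cs (.par P' O') ∧ Tr P s P' ∧ CoTr O s O' := by
  induction h with
  | refl => exact ⟨[], [], P, O, rfl, Tr.nil _, CoTr.nil _⟩
  | tail _ hstep ih =>
    obtain ⟨cs, s, P', O', rfl, hTr, hCo⟩ := ih
    obtain ⟨W, hW, rfl⟩ := tau_rl_inv cs hstep
    cases hW with
    | parR h => exact ⟨cs, s, P', _, rfl, hTr, hCo.snocTau h⟩
    | parL h => exact ⟨cs, s, _, O', rfl, hTr.snocTau h, hCo⟩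
    | @commL _ _ _ _ a b hS hT =>
      exact ⟨cs, s ++ [.inp a b], _, _, rfl, hTr.snocLab hS,
        hCo.snocLab (ℓ := .inp a b) (Or.inl hT)⟩
    | @commR _ _ _ _ a b hS hT =>
      exact ⟨cs, s ++ [.out a b], _, _, rfl, hTr.snocLab hS,
        hCo.snocLab (ℓ := .out a b) hT⟩
    | @closeL _ _ _ _ a c hS hT =>
      exact ⟨cs ++ [c], s ++ [.inp a c], _, _, rl_snoc cs c _,
        hTr.snocLab hS, hCo.snocLab (ℓ := .inp a c) (Or.inr hT)⟩
    | @closeR _ _ _ _ a c hS hT =>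
      exact ⟨cs ++ [c], s ++ [.bout a c], _, _, rl_snoc cs c _,
        hTr.snocLab hS, hCo.snocLab (ℓ := .bout a c) hT⟩

lemma fires_split {cs : List Name} {P' O' : Term} (h : FiresOmega (rl cs (.par P' O')))
    (hpi : P'.isPi) : FiresOmega O' := by
  obtain ⟨Y, hY⟩ := omega_rl_inv cs h
  cases hY with
  | parR h => exact ⟨_, h⟩
  | parL h => exact absurd rfl (step_isPi h hpi).2

lemma tr_isPi {P s P'} (h : Tr P s P') (hpi : P.isPi) : P'.isPi := by
  induction h with
  | nil => exact hpi
  | tau h₁ _ ih => exact ih (step_isPi h₁ hpi).1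
  | lab h₁ _ ih => exact ih (step_isPi h₁ hpi).1

lemma tr_descendant {P s P'} (h : Tr P s P') : Descendant P P' := by
  induction h with
  | nil => exact Relation.ReflTransGen.refl
  | tau h₁ _ ih => exact Relation.ReflTransGen.head ⟨_, h₁⟩ ih
  | lab h₁ _ ih => exact Relation.ReflTransGen.head ⟨_, h₁⟩ ih

lemma tr_nil_weak {P P'} (h : Tr P [] P') : WeakTau P P' := by
  generalize hs : ([] : List Label) = s at h
  induction h with
  | nil => exact Relation.ReflTransGen.refl
  | tau h₁ _ ih => exact Relation.ReflTransGen.head h₁ (ih hs)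
  | lab h₁ h₂ ih => simp at hs

lemma cotr_nil_weak {B B'} (h : CoTr B [] B') : WeakTau B B' := by
  generalize hs : ([] : List Label) = s at h
  induction h with
  | nil => exact Relation.ReflTransGen.refl
  | tau h₁ _ ih => exact Relation.ReflTransGen.head h₁ (ih hs)
  | lab h₁ h₂ ih => simp at hs

lemma tr_destruct {P ℓ s P'} (h : Tr P (ℓ :: s) P') :
    ∃ P₁ P₂, WeakTau P P₁ ∧ Step P₁ (.lab ℓ) P₂ ∧ Tr P₂ s P' := by
  generalize hs : (ℓ :: s : List Label) = t at h
  induction h with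
  | nil => simp at hs
  | tau h₁ _ ih =>
    obtain ⟨P₁, P₂, hw, hst, htr⟩ := ih hs
    exact ⟨P₁, P₂, Relation.ReflTransGen.head h₁ hw, hst, htr⟩
  | lab h₁ h₂ ih =>
    obtain ⟨rfl, rfl⟩ : _ ∧ _ := by injection hs.symm with h1 h2; exact ⟨h1, h2⟩
    exact ⟨_, _, Relation.ReflTransGen.refl, h₁, h₂⟩

lemma cotr_destruct {B ℓ s B'} (h : CoTr B (ℓ :: s) B') :
    ∃ B₁ B₂, WeakTau B B₁ ∧ CoStep ℓ B₁ B₂ ∧ CoTr B₂ s B' := by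
  generalize hs : (ℓ :: s : List Label) = t at h
  induction h with
  | nil => simp at hs
  | tau h₁ _ ih =>
    obtain ⟨B₁, B₂, hw, hst, htr⟩ := ih hs
    exact ⟨B₁, B₂, Relation.ReflTransGen.head h₁ hw, hst, htr⟩
  | lab h₁ h₂ ih =>
    obtain ⟨rfl, rfl⟩ : _ ∧ _ := by injection hs.symm with h1 h2; exact ⟨h1, h2⟩
    exact ⟨_, _, Relation.ReflTransGen.refl, h₁, h₂⟩

/-- Name boundedness along a decomposed run. -/
lemma names_bound {N : Finset Name} :
    ∀ (s : List Label) (P O P' O' : Term), Tr P s P' → CoTr O s O' →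
      nms P ⊆ N → nms O ⊆ N →
      (∀ ℓ ∈ s, lnms ℓ ⊆ N) ∧ nms P' ⊆ N ∧ nms O' ⊆ N := by
  intro s
  induction s with
  | nil =>
    intro P O P' O' hP hO hPN hON
    exact ⟨by simp, (weakTau_nms (tr_nil_weak hP)).trans hPN,
      (weakTau_nms (cotr_nil_weak hO)).trans hON⟩
  | cons ℓ s ih =>
    intro P O P' O' hP hO hPN hON
    obtain ⟨P₁, P₂, hw1, hst1, htr1⟩ := tr_destruct hP
    obtain ⟨O₁, O₂, hw2, hst2, htr2⟩ := cotr_destruct hO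
    have hP₁ : nms P₁ ⊆ N := (weakTau_nms hw1).trans hPN
    have hO₁ : nms O₁ ⊆ N := (weakTau_nms hw2).trans hON
    have hl : lnms ℓ ⊆ N := by
      cases ℓ with
      | inp a b =>
        rcases hst2 with h | h
        · obtain ⟨ha, hb⟩ := step_out_mem h
          intro m hm
          simp only [lnms, Finset.mem_insert, Finset.mem_singleton] at hm
          rcases hm with rfl | rfl
          · exact hO₁ ha
          · exact hO₁ hb
        · obtain ⟨ha, hb⟩ := step_bout_mem h
          intro m hm
          simp only [lnms, Finset.mem_insert, Finset.mem_singleton] at hm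
          rcases hm with rfl | rfl
          · exact hO₁ ha
          · exact hO₁ hb
      | out a b =>
        obtain ⟨ha, hb⟩ := step_out_mem hst1
        intro m hm
        simp only [lnms, Finset.mem_insert, Finset.mem_singleton] at hm
        rcases hm with rfl | rfl
        · exact hP₁ ha
        · exact hP₁ hb
      | bout a b =>
        obtain ⟨ha, hb⟩ := step_bout_mem hst1
        intro m hm
        simp only [lnms, Finset.mem_insert, Finset.mem_singleton] at hm
        rcases hm with rfl | rfl
        · exact hP₁ ha
        · exact hP₁ hb
    have hP₂ : nms P₂ ⊆ N := by
      refine (step_nms hst1).trans (Finset.union_subset hP₁ ?_)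
      simpa [anms] using hl
    have hO₂ : nms O₂ ⊆ N := by
      have : ∃ ℓ', lnms ℓ' = lnms ℓ ∧ Step O₁ (.lab ℓ') O₂ := by
        cases ℓ with
        | inp a b =>
          rcases hst2 with h | h
          · exact ⟨.out a b, rfl, h⟩
          · exact ⟨.bout a b, rfl, h⟩
        | out a b => exact ⟨.inp a b, rfl, hst2⟩
        | bout a b => exact ⟨.inp a b, rfl, hst2⟩
      obtain ⟨ℓ', hℓ', h⟩ := this
      refine (step_nms h).trans (Finset.union_subset hO₁ ?_)
      simpa [anms, hℓ'] using hl
    obtain ⟨hs, hP', hO'⟩ := ih P₂ O₂ P' O' htr1 htr2 hP₂ hO₂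
    refine ⟨?_, hP', hO'⟩
    intro ℓ' hℓ'
    rcases List.mem_cons.1 hℓ' with rfl | hℓ'
    · exact hl
    · exact hs ℓ' hℓ'

/-- Labels matching up to the free/bound output distinction. -/
def simL : Label → Label → Prop
  | .inp a b, m => m = .inp a b
  | .out a b, m => m = .out a b ∨ m = .bout a b
  | .bout a b, m => m = .out a b ∨ m = .bout a b

/-- Composition: replaying a trace against a co-trace. -/
lemma compose : ∀ (s sh0 : List Label) (Q O Q' O' : Term), List.Forall₂ simL s sh0 →
    Tr Q sh0 Q' → CoTr O s O' → ∃ cs, WeakTau (.par Q O) (rl cs (.par Q' O')) := by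
  intro s
  induction s with
  | nil =>
    intro sh0 Q O Q' O' hsim hQ hO
    cases hsim
    exact ⟨[], (weakTau_parL O (tr_nil_weak hQ)).trans (weakTau_parR (cotr_nil_weak hO))⟩
  | cons ℓ s ih =>
    intro sh0 Q O Q' O' hsim hQ hO
    cases hsim with
    | cons hℓ hsim =>
      rename_i lh sh
      obtain ⟨Q₁, Q₂, hw1, hst1, htr1⟩ := tr_destruct hQ
      obtain ⟨O₁, O₂, hw2, hst2, htr2⟩ := cotr_destruct hO
      have hpre : WeakTau (.par Q O) (.par Q₁ O₁) :=
        (weakTau_parL O hw1).trans (weakTau_parR hw2)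
      have hτ : Tau (.par Q₁ O₁) (.par Q₂ O₂) ∨
          ∃ b, Tau (.par Q₁ O₁) (.res b (.par Q₂ O₂)) := by
        cases ℓ with
        | inp a b =>
          rw [show lh = .inp a b from hℓ] at hst1
          rcases hst2 with h | h
          · exact Or.inl (Step.commL hst1 h)
          · exact Or.inr ⟨b, Step.closeL hst1 h⟩
        | out a b =>
          rcases hℓ with rfl | rfl
          · exact Or.inl (Step.commR hst1 hst2)
          · exact Or.inr ⟨b, Step.closeR hst1 hst2⟩
        | bout a b =>
          rcases hℓ with rfl | rfl
          · exact Or.inl (Step.commR hst1 hst2)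
          · exact Or.inr ⟨b, Step.closeR hst1 hst2⟩
      obtain ⟨cs, hcs⟩ := ih sh Q₂ O₂ Q' O' hsim htr1 htr2
      rcases hτ with h | ⟨b, h⟩
      · exact ⟨cs, (hpre.tail h).trans hcs⟩
      · refine ⟨b :: cs, (hpre.tail h).trans ?_⟩
        exact weakTau_rl [b] hcs
/-! ### The testing observer for a trace -/

def emitC (c : Name) : Term := .out (.nm c) 1 (fun _ => .nm c) (fun _ => .nil)
def trigC (c : Name) : Term := .inp (.nm c) 0 1 (fun _ => .omega)
def divC (c : Name) : Term := .res c (.par (emitC c) (.repInp (.nm c) 0 (emitC c)))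
def contC (c b : Name) (T : Term) : Term :=
  .par (.mat (.vr 0) (.nm b) T) (.mis (.vr 0) (.nm b) .omega)

def OB (c : Name) : List Label → Term
  | [] => divC c
  | .inp a b :: s => .res c (.par (trigC c)
      (.sepOut 2 ![.nm a, .nm c] ![.nm b, .nm c] ![OB c s, .nil]))
  | .out a b :: s => .res c (.par (emitC c)
      (.sepInp 2 ![.nm a, .nm c] 0 ![contC c b (OB c s), .omega]))
  | .bout a b :: s => .res c (.par (emitC c)
      (.sepInp 2 ![.nm a, .nm c] 0 ![contC c b (OB c s), .omega]))

lemma iUnion_fin_one (f : Fin 1 → Set ℕ) : (⋃ i, f i) = f 0 := by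
  ext x
  simp only [Set.mem_iUnion]
  exact ⟨fun ⟨i, h⟩ => by fin_cases i <;> exact h, fun h => ⟨0, h⟩⟩

lemma iUnion_fin_two (f : Fin 2 → Set ℕ) : (⋃ i, f i) = f 0 ∪ f 1 := by
  ext x
  simp only [Set.mem_iUnion, Set.mem_union]
  constructor
  · rintro ⟨i, h⟩; fin_cases i
    · exact Or.inl h
    · exact Or.inr h
  · rintro (h | h)
    · exact ⟨0, h⟩
    · exact ⟨1, h⟩

lemma emitC_closed (c : Name) : Closed (emitC c) := by
  simp [Closed, emitC, Term.fvar, NV.vars, iUnion_fin_one]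

lemma trigC_closed (c : Name) : Closed (trigC c) := by
  simp [Closed, trigC, Term.fvar, NV.vars, iUnion_fin_one]

lemma divC_closed (c : Name) : Closed (divC c) := by
  have h1 := emitC_closed c
  simp [Closed] at h1
  simp [Closed, divC, Term.fvar, NV.vars, h1]

lemma OB_closed (c : Name) : ∀ s, Closed (OB c s) := by
  intro s
  induction s with
  | nil => exact divC_closed c
  | cons ℓ s ih =>
    have h1 := emitC_closed c
    have h2 := trigC_closed c
    simp only [Closed] at h1 h2 ih
    cases ℓ with
    | inp a b =>
      simp [Closed, OB, Term.fvar, NV.vars, iUnion_fin_two, h1, h2, ih,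
        Matrix.cons_val_zero, Matrix.cons_val_one, Matrix.head_cons]
    | out a b =>
      simp [Closed, OB, contC, Term.fvar, NV.vars, iUnion_fin_two, h1, h2, ih,
        Matrix.cons_val_zero, Matrix.cons_val_one, Matrix.head_cons]
    | bout a b =>
      simp [Closed, OB, contC, Term.fvar, NV.vars, iUnion_fin_two, h1, h2, ih,
        Matrix.cons_val_zero, Matrix.cons_val_one, Matrix.head_cons]

lemma subst_OB (c : Name) (s : List Label) (x b' : Name) :
    (OB c s).subst1 x b' = OB c s := subst1_closed (OB_closed c s) x b'

lemma subst_contC (c b : Name) (s : List Label) (b' : Name) :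
    (contC c b (OB c s)).subst1 0 b' =
      .par (.mat (.nm b') (.nm b) (OB c s)) (.mis (.nm b') (.nm b) .omega) := by
  have h := subst_OB c s 0 b'
  simp only [Term.subst1] at h ⊢
  simp [contC, Term.applyVar, NV.sub, h]

lemma sil_OB (c : Name) : ∀ s, sil (OB c s) := by
  intro s
  induction s with
  | nil => simp [OB, divC, sil, emitC, trigC]
  | cons ℓ s ih =>
    cases ℓ <;> simp [OB, sil, emitC, trigC]

/-! ### Debris contexts -/

inductive Deb (c : Name) : Term → Term → Prop
  | refl (T) : Deb c T T
  | trigD {T U} : Deb c T U → Deb c T (.res c (.par (trigC c) U))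
  | matD {T U} (b : Name) : Deb c T U →
      Deb c T (.res c (.par (emitC c) (.par (.mat (.nm b) (.nm b) U)
        (.mis (.nm b) (.nm b) .omega))))
  | matD' {T U} (b : Name) : Deb c T U →
      Deb c T (.res c (.par (emitC c) (.par U (.mis (.nm b) (.nm b) .omega))))

lemma Deb.trans {c X T' U'} (h1 : Deb c X T') (h2 : Deb c T' U') : Deb c X U' := by
  induction h2 with
  | refl => exact h1
  | trigD _ ih => exact Deb.trigD ih
  | matD b _ ih => exact Deb.matD b ih
  | matD' b _ ih => exact Deb.matD' b ih

lemma notin_names {c : Name} {ℓ : Label} (h : c ∉ lnms ℓ) : c ∉ (Act.lab ℓ).names := by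
  cases ℓ <;> simp [lnms, Act.names, Label.names] at h ⊢ <;> tauto

lemma deb_sil {c T U} (hD : Deb c T U) (hT : sil T) : sil U := by
  induction hD with
  | refl => exact hT
  | trigD _ ih => simp [sil, trigC]; exact ih
  | matD b _ ih =>
    simp only [sil, emitC, trigC]
    exact ⟨trivial, fun h => ih, fun h => absurd (rfl : NV.nm b = NV.nm b) h⟩
  | matD' b _ ih =>
    simp only [sil, emitC, trigC]
    exact ⟨trivial, ih, fun h => absurd (rfl : NV.nm b = NV.nm b) h⟩

lemma deb_lift_lab {c T U T' ℓ} (hD : Deb c T U) (h : Step T (.lab ℓ) T')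
    (hc : c ∉ lnms ℓ) : ∃ U', Step U (.lab ℓ) U' ∧ Deb c T' U' := by
  induction hD with
  | refl => exact ⟨T', h, Deb.refl _⟩
  | trigD _ ih =>
    obtain ⟨U', hU', hD'⟩ := ih
    exact ⟨_, Step.resStep (Step.parR hU') (notin_names hc), Deb.trigD hD'⟩
  | matD b _ ih =>
    obtain ⟨U', hU', hD'⟩ := ih
    exact ⟨_, Step.resStep (Step.parR (Step.parL (Step.matStep hU'))) (notin_names hc),
      Deb.matD' b hD'⟩
  | matD' b _ ih =>
    obtain ⟨U', hU', hD'⟩ := ih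
    exact ⟨_, Step.resStep (Step.parR (Step.parL hU')) (notin_names hc), Deb.matD' b hD'⟩

lemma deb_lift_tau {c T U T'} (hD : Deb c T U) (h : Tau T T') :
    ∃ U', Tau U U' ∧ Deb c T' U' := by
  induction hD with
  | refl => exact ⟨T', h, Deb.refl _⟩
  | trigD _ ih =>
    obtain ⟨U', hU', hD'⟩ := ih
    exact ⟨_, Step.resStep (Step.parR hU') (by simp [Act.names]), Deb.trigD hD'⟩
  | matD b _ ih =>
    obtain ⟨U', hU', hD'⟩ := ih
    exact ⟨_, Step.resStep (Step.parR (Step.parL (Step.matStep hU'))) (by simp [Act.names]),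
      Deb.matD' b hD'⟩
  | matD' b _ ih =>
    obtain ⟨U', hU', hD'⟩ := ih
    exact ⟨_, Step.resStep (Step.parR (Step.parL hU')) (by simp [Act.names]),
      Deb.matD' b hD'⟩

lemma OB_shape (c : Name) (s : List Label) : ∃ V, OB c s = .res c V := by
  cases s with
  | nil => exact ⟨_, rfl⟩
  | cons ℓ s => cases ℓ <;> exact ⟨_, rfl⟩

lemma deb_shape {c s U} (hD : Deb c (OB c s) U) : ∃ V, U = .res c V := by
  cases hD with
  | refl => exact OB_shape c s
  | trigD _ => exact ⟨_, rfl⟩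
  | matD b _ => exact ⟨_, rfl⟩
  | matD' b _ => exact ⟨_, rfl⟩

lemma res_no_inp_c {c : Name} {V W : Term} {b' : Name} :
    ¬ Step (.res c V) (.lab (.inp c b')) W := by
  intro h
  cases h with
  | resStep h hc => exact hc (by simp [Act.names, Label.names])

lemma res_no_out_subj {c : Name} {V W : Term} {b' : Name} :
    ¬ Step (.res c V) (.lab (.out c b')) W := by
  intro h
  cases h with
  | resStep h hc => exact hc (by simp [Act.names, Label.names])

lemma res_no_out_obj {c : Name} {V W : Term} {a' : Name} :
    ¬ Step (.res c V) (.lab (.out a' c)) W := by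
  intro h
  cases h with
  | resStep h hc => exact hc (by simp [Act.names, Label.names])
lemma fires_mis {b' b : Name} (hne : b' ≠ b) :
    FiresOmega (.mis (.nm b') (.nm b) .omega) :=
  ⟨_, Step.misStep hne Step.omegaStep⟩

lemma stage_inp_tau_fires {c a b : Name} {s₀ : List Label} (hac : a ≠ c) {B' : Term}
    (h : Tau (.res c (.par (trigC c)
      (.sepOut 2 ![.nm a, .nm c] ![.nm b, .nm c] ![OB c s₀, .nil]))) B') :
    FiresOmega B' := by
  obtain ⟨W, hW, rfl⟩ := tau_res_inv h
  cases hW with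
  | parL h1 => cases h1
  | parR h1 => cases h1
  | commL h1 h2 =>
    cases h1
    cases h2 with
    | sepOut i h3 h4 =>
      fin_cases i
      · simp only [Matrix.cons_val_zero] at h3
        injection h3 with h3
        exact absurd h3 hac
      · exact fires_res (fires_parL ⟨_, Step.omegaStep⟩)
  | commR h1 h2 => cases h1
  | closeL h1 h2 => cases h2
  | closeR h1 h2 => cases h1

lemma stage_out_tau_fires {c a b : Name} {s₀ : List Label} (hac : a ≠ c) {B' : Term}
    (h : Tau (.res c (.par (emitC c)
      (.sepInp 2 ![.nm a, .nm c] 0 ![contC c b (OB c s₀), .omega]))) B') :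
    FiresOmega B' := by
  obtain ⟨W, hW, rfl⟩ := tau_res_inv h
  cases hW with
  | parL h1 => cases h1
  | parR h1 => cases h1
  | commL h1 h2 => cases h1
  | commR h1 h2 =>
    cases h1 with
    | out i h3 =>
      cases h2 with
      | sepInp j h4 h5 =>
        fin_cases j
        · simp only [Matrix.cons_val_zero] at h4
          injection h4 with h4
          exact absurd h4 hac
        · have : (![contC c b (OB c s₀), Term.omega] (1 : Fin 2)) = Term.omega := by
            simp
          refine fires_res (fires_parR ?_)
          rw [show ((fun i => i) (⟨1, by omega⟩ : Fin 2)) = (1 : Fin 2) from rfl]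
          exact ⟨_, this ▸ Step.omegaStep⟩
  | closeL h1 h2 => cases h2
  | closeR h1 h2 => cases h1

/-- Any internal action of a debris-wrapped observer stage makes ω fireable. -/
lemma deb_tau_fires {c : Name} {ℓ₀ : Label} {s₀ : List Label} {B : Term}
    (hca : c ∉ lnms ℓ₀) (hD : Deb c (OB c (ℓ₀ :: s₀)) B) :
    ∀ {B'}, Tau B B' → FiresOmega B' := by
  induction hD with
  | refl =>
    intro B' h
    cases ℓ₀ with
    | inp a b =>
      exact stage_inp_tau_fires (by simp [lnms] at hca; tauto) h
    | out a b =>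
      exact stage_out_tau_fires (by simp [lnms] at hca; tauto) h
    | bout a b =>
      exact stage_out_tau_fires (by simp [lnms] at hca; tauto) h
  | @trigD U hD' ih =>
    intro B' h
    obtain ⟨W, hW, rfl⟩ := tau_res_inv h
    cases hW with
    | parL h1 => cases h1
    | parR h1 => exact fires_res (fires_parR (ih h1))
    | commL h1 h2 =>
      cases h1
      obtain ⟨V, rfl⟩ := deb_shape hD'
      exact absurd h2 res_no_out_subj
    | commR h1 h2 => cases h1
    | closeL h1 h2 =>
      cases h1
      exact fires_res (fires_res (fires_parL ⟨_, Step.omegaStep⟩))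
    | closeR h1 h2 => cases h1
  | @matD U b₀ hD' ih =>
    intro B' h
    obtain ⟨W, hW, rfl⟩ := tau_res_inv h
    cases hW with
    | parL h1 => cases h1
    | parR h1 =>
      cases h1 with
      | parL h2 =>
        cases h2 with
        | matStep h3 => exact fires_res (fires_parR (fires_parL (ih h3)))
      | parR h2 => cases h2 with | misStep hne h3 => exact absurd rfl hne
      | commL h2 h3 => cases h3 with | misStep hne h4 => exact absurd rfl hne
      | commR h2 h3 => cases h3 with | misStep hne h4 => exact absurd rfl hne
      | closeL h2 h3 => cases h3 with | misStep hne h4 => exact absurd rfl hne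
      | closeR h2 h3 => cases h3 with | misStep hne h4 => exact absurd rfl hne
    | commL h1 h2 => cases h1
    | commR h1 h2 =>
      cases h1 with
      | out i h3 =>
        cases h2 with
        | parL h4 =>
          cases h4 with
          | matStep h5 =>
            obtain ⟨V, rfl⟩ := deb_shape hD'
            exact absurd h5 res_no_inp_c
        | parR h4 => cases h4 with | misStep hne h5 => exact absurd rfl hne
    | closeL h1 h2 => cases h1
    | closeR h1 h2 => cases h1
  | @matD' U b₀ hD' ih =>
    intro B' h
    obtain ⟨W, hW, rfl⟩ := tau_res_inv h
    cases hW with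
    | parL h1 => cases h1
    | parR h1 =>
      cases h1 with
      | parL h2 => exact fires_res (fires_parR (fires_parL (ih h2)))
      | parR h2 => cases h2 with | misStep hne h3 => exact absurd rfl hne
      | commL h2 h3 => cases h3 with | misStep hne h4 => exact absurd rfl hne
      | commR h2 h3 => cases h3 with | misStep hne h4 => exact absurd rfl hne
      | closeL h2 h3 => cases h3 with | misStep hne h4 => exact absurd rfl hne
      | closeR h2 h3 => cases h3 with | misStep hne h4 => exact absurd rfl hne
    | commL h1 h2 => cases h1
    | commR h1 h2 =>
      cases h1 with
      | out i h3 =>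
        cases h2 with
        | parL h4 =>
          obtain ⟨V, rfl⟩ := deb_shape hD'
          exact absurd h4 res_no_inp_c
        | parR h4 => cases h4 with | misStep hne h5 => exact absurd rfl hne
    | closeL h1 h2 => cases h1
    | closeR h1 h2 => cases h1
lemma stage_inp_lab_inv {c a b : Name} {s₀ : List Label} {ℓ : Label} {B' : Term}
    (hbc : b ≠ c)
    (h : Step (.res c (.par (trigC c)
      (.sepOut 2 ![.nm a, .nm c] ![.nm b, .nm c] ![OB c s₀, .nil]))) (.lab ℓ) B') :
    ℓ = .bout c c ∨ (ℓ = .out a b ∧ B' = .res c (.par (trigC c) (OB c s₀))) := by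
  cases h with
  | open_ h1 =>
    cases h1 with
    | parL h2 => cases h2
    | parR h2 =>
      cases h2 with
      | sepOut i h3 h4 =>
        fin_cases i
        · simp only [Matrix.cons_val_zero] at h4
          injection h4 with h4
          exact absurd h4 hbc
        · simp only [Matrix.cons_val_one, Matrix.head_cons] at h3
          injection h3 with h3
          exact Or.inl (by rw [h3])
  | resStep h1 hc =>
    cases h1 with
    | parL h2 =>
      cases h2 with
      | inp i c₀ => exact absurd (by simp [Act.names, Label.names]) hc
    | parR h2 =>
      cases h2 with
      | sepOut i h3 h4 =>
        fin_cases i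
        · simp only [Matrix.cons_val_zero] at h3 h4
          injection h3 with h3
          injection h4 with h4
          subst h3; subst h4
          exact Or.inr ⟨rfl, rfl⟩
        · simp only [Matrix.cons_val_one, Matrix.head_cons] at h3
          injection h3 with h3
          subst h3
          exact absurd (by simp [Act.names, Label.names]) hc

lemma stage_out_lab_inv {c a b : Name} {s₀ : List Label} {ℓ : Label} {B' : Term}
    (h : Step (.res c (.par (emitC c)
      (.sepInp 2 ![.nm a, .nm c] 0 ![contC c b (OB c s₀), .omega]))) (.lab ℓ) B') :
    ℓ = .bout c c ∨ ∃ b', ℓ = .inp a b' ∧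
      B' = .res c (.par (emitC c) (.par (.mat (.nm b') (.nm b) (OB c s₀))
        (.mis (.nm b') (.nm b) .omega))) := by
  cases h with
  | open_ h1 =>
    cases h1 with
    | parL h2 =>
      cases h2 with
      | out i h3 =>
        exact Or.inl rfl
    | parR h2 => cases h2
  | resStep h1 hc =>
    cases h1 with
    | parL h2 =>
      cases h2 with
      | out i h3 =>
        injection h3 with h3
        subst h3
        exact absurd (by simp [Act.names, Label.names]) hc
    | parR h2 =>
      cases h2 with
      | sepInp i h3 c₀ =>
        fin_cases i
        · simp only [Fin.zero_eta, Matrix.cons_val_zero] at h3 ⊢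
          injection h3 with h3
          subst h3
          exact Or.inr ⟨c₀, rfl, by rw [subst_contC]⟩
        · simp only [Matrix.cons_val_one, Matrix.head_cons] at h3
          injection h3 with h3
          subst h3
          exact absurd (by simp [Act.names, Label.names]) hc

/-- Label inversion for debris-wrapped observer stages. -/
lemma deb_lab_inv {c : Name} {ℓ₀ : Label} {s₀ : List Label} {B : Term} {ℓ : Label}
    (hca : c ∉ lnms ℓ₀) (hD : Deb c (OB c (ℓ₀ :: s₀)) B) :
    ∀ {B'}, Step B (.lab ℓ) B' →
    ℓ = .bout c c ∨
    (∃ a b, ℓ₀ = .inp a b ∧ ℓ = .out a b ∧ Deb c (OB c s₀) B') ∨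
    (∃ a b b', (ℓ₀ = .out a b ∨ ℓ₀ = .bout a b) ∧ ℓ = .inp a b' ∧
      ((b' = b ∧ Deb c (OB c s₀) B') ∨ FiresOmega B')) := by
  induction hD with
  | refl =>
    intro B' h
    cases ℓ₀ with
    | inp a b =>
      have hbc : b ≠ c := by simp [lnms] at hca; tauto
      rcases stage_inp_lab_inv hbc h with h' | ⟨h1, rfl⟩
      · exact Or.inl h'
      · exact Or.inr (Or.inl ⟨a, b, rfl, h1, Deb.trigD (Deb.refl _)⟩)
    | out a b =>
      rcases stage_out_lab_inv h with h' | ⟨b', h1, rfl⟩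
      · exact Or.inl h'
      · by_cases hbb : b' = b
        · subst hbb
          exact Or.inr (Or.inr ⟨a, b', b', Or.inl rfl, h1,
            Or.inl ⟨rfl, Deb.matD b' (Deb.refl _)⟩⟩)
        · exact Or.inr (Or.inr ⟨a, b, b', Or.inl rfl, h1,
            Or.inr (fires_res (fires_parR (fires_parR (fires_mis hbb))))⟩)
    | bout a b =>
      rcases stage_out_lab_inv h with h' | ⟨b', h1, rfl⟩
      · exact Or.inl h'
      · by_cases hbb : b' = b
        · subst hbb
          exact Or.inr (Or.inr ⟨a, b', b', Or.inr rfl, h1,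
            Or.inl ⟨rfl, Deb.matD b' (Deb.refl _)⟩⟩)
        · exact Or.inr (Or.inr ⟨a, b, b', Or.inr rfl, h1,
            Or.inr (fires_res (fires_parR (fires_parR (fires_mis hbb))))⟩)
  | @trigD U hD' ih =>
    intro B' h
    cases h with
    | open_ h1 =>
      cases h1 with
      | parL h2 => cases h2
      | parR h2 =>
        obtain ⟨V, rfl⟩ := deb_shape hD'
        exact absurd h2 res_no_out_obj
    | resStep h1 hc =>
      cases h1 with
      | parL h2 =>
        cases h2 with
        | inp i c₀ => exact absurd (by simp [Act.names, Label.names]) hc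
      | parR h2 =>
        rcases ih h2 with rfl | ⟨a, b, h3, h4, hDeb⟩ | ⟨a, b, b', h3, h4, h5⟩
        · exact absurd (by simp [Act.names, Label.names]) hc
        · exact Or.inr (Or.inl ⟨a, b, h3, h4, Deb.trigD hDeb⟩)
        · rcases h5 with ⟨heq, hDeb⟩ | hfire
          · exact Or.inr (Or.inr ⟨a, b, b', h3, h4, Or.inl ⟨heq, Deb.trigD hDeb⟩⟩)
          · exact Or.inr (Or.inr ⟨a, b, b', h3, h4,
              Or.inr (fires_res (fires_parR hfire))⟩)
  | @matD U b₀ hD' ih =>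
    intro B' h
    cases h with
    | open_ h1 =>
      cases h1 with
      | parL h2 =>
        cases h2 with
        | out i h3 =>
          exact Or.inl rfl
      | parR h2 =>
        cases h2 with
        | parL h3 =>
          cases h3 with
          | matStep h4 =>
            obtain ⟨V, rfl⟩ := deb_shape hD'
            exact absurd h4 res_no_out_obj
        | parR h3 => cases h3 with | misStep hne h4 => exact absurd rfl hne
    | resStep h1 hc =>
      cases h1 with
      | parL h2 =>
        cases h2 with
        | out i h3 =>
          injection h3 with h3
          subst h3
          exact absurd (by simp [Act.names, Label.names]) hc
      | parR h2 =>
        cases h2 with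
        | parL h3 =>
          cases h3 with
          | matStep h4 =>
            rcases ih h4 with rfl | ⟨a, b, h5, h6, hDeb⟩ | ⟨a, b, b', h5, h6, h7⟩
            · exact absurd (by simp [Act.names, Label.names]) hc
            · exact Or.inr (Or.inl ⟨a, b, h5, h6, Deb.matD' b₀ hDeb⟩)
            · rcases h7 with ⟨heq, hDeb⟩ | hfire
              · exact Or.inr (Or.inr ⟨a, b, b', h5, h6, Or.inl ⟨heq, Deb.matD' b₀ hDeb⟩⟩)
              · exact Or.inr (Or.inr ⟨a, b, b', h5, h6,
                  Or.inr (fires_res (fires_parR (fires_parL hfire)))⟩)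
        | parR h3 => cases h3 with | misStep hne h4 => exact absurd rfl hne
  | @matD' U b₀ hD' ih =>
    intro B' h
    cases h with
    | open_ h1 =>
      cases h1 with
      | parL h2 =>
        cases h2 with
        | out i h3 =>
          exact Or.inl rfl
      | parR h2 =>
        cases h2 with
        | parL h3 =>
          obtain ⟨V, rfl⟩ := deb_shape hD'
          exact absurd h3 res_no_out_obj
        | parR h3 => cases h3 with | misStep hne h4 => exact absurd rfl hne
    | resStep h1 hc =>
      cases h1 with
      | parL h2 =>
        cases h2 with
        | out i h3 =>
          injection h3 with h3
          subst h3
          exact absurd (by simp [Act.names, Label.names]) hc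
      | parR h2 =>
        cases h2 with
        | parL h3 =>
          rcases ih h3 with rfl | ⟨a, b, h5, h6, hDeb⟩ | ⟨a, b, b', h5, h6, h7⟩
          · exact absurd (by simp [Act.names, Label.names]) hc
          · exact Or.inr (Or.inl ⟨a, b, h5, h6, Deb.matD' b₀ hDeb⟩)
          · rcases h7 with ⟨heq, hDeb⟩ | hfire
            · exact Or.inr (Or.inr ⟨a, b, b', h5, h6, Or.inl ⟨heq, Deb.matD' b₀ hDeb⟩⟩)
            · exact Or.inr (Or.inr ⟨a, b, b', h5, h6,
                Or.inr (fires_res (fires_parR (fires_parL hfire)))⟩)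
        | parR h3 => cases h3 with | misStep hne h4 => exact absurd rfl hne
/-- A debris-wrapped stage always has an internal action available (the escape). -/
lemma deb_has_tau {c : Name} {ℓ₀ : Label} {s₀ : List Label} {B : Term}
    (hD : Deb c (OB c (ℓ₀ :: s₀)) B) : ∃ B', Tau B B' := by
  induction hD with
  | refl =>
    cases ℓ₀ with
    | inp a b =>
      refine ⟨_, Step.resStep (Step.commL (Step.inp (Ts := fun _ => .omega) 0 c)
        (Step.sepOut 1 rfl rfl)) (by simp [Act.names])⟩
    | out a b =>
      refine ⟨_, Step.resStep (Step.commR (Step.out (Ts := fun _ => .nil) 0 rfl)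
        (Step.sepInp 1 rfl c)) (by simp [Act.names])⟩
    | bout a b =>
      refine ⟨_, Step.resStep (Step.commR (Step.out (Ts := fun _ => .nil) 0 rfl)
        (Step.sepInp 1 rfl c)) (by simp [Act.names])⟩
  | trigD _ ih =>
    obtain ⟨B', hB'⟩ := ih
    exact ⟨_, Step.resStep (Step.parR hB') (by simp [Act.names])⟩
  | matD b _ ih =>
    obtain ⟨B', hB'⟩ := ih
    exact ⟨_, Step.resStep (Step.parR (Step.parL (Step.matStep hB'))) (by simp [Act.names])⟩
  | matD' b _ ih =>
    obtain ⟨B', hB'⟩ := ih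
    exact ⟨_, Step.resStep (Step.parR (Step.parL hB')) (by simp [Act.names])⟩

/-- Silent finite paths. -/
inductive SPath : Term → Term → Prop
  | refl (X) : SPath X X
  | head {X Y Z} : Tau X Y → sil X → SPath Y Z → SPath X Z

lemma SPath.trans {X Y Z} (h1 : SPath X Y) (h2 : SPath Y Z) : SPath X Z := by
  induction h1 with
  | refl => exact h2
  | head hτ hs _ ih => exact SPath.head hτ hs (ih h2)

lemma sil_rl {X} (h : sil X) : ∀ cs, sil (rl cs X) := by
  intro cs
  induction cs with
  | nil => exact h
  | cons c cs ih => exact ih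

lemma spath_res {X Y} (b : Name) (h : SPath X Y) : SPath (.res b X) (.res b Y) := by
  induction h with
  | refl => exact SPath.refl _
  | head hτ hs _ ih =>
    exact SPath.head (Step.resStep hτ (by simp [Act.names])) hs (ih)

lemma spath_index {X Z} (h : SPath X Z) :
    ∃ n f, f 0 = X ∧ f n = Z ∧ FinPath f n ∧ ∀ i < n, ¬ FiresOmega (f i) := by
  induction h with
  | refl X' => exact ⟨0, fun _ => X', rfl, rfl, fun i hi => by omega, fun i hi => by omega⟩
  | @head X Y Z hτ hs _ ih =>
    obtain ⟨n, f, h0, hn, hp, hsil⟩ := ih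
    refine ⟨n + 1, fun i => if i = 0 then X else f (i - 1), rfl, by simp [hn], ?_, ?_⟩
    · intro i hi
      cases i with
      | zero => simpa [h0] using hτ
      | succ i => simpa using hp i (by omega)
    · intro i hi
      cases i with
      | zero => simpa using sil_no_fire hs
      | succ i => simpa using hsil i (by omega)

/-- The divergent unit. -/
def nestD (c : Name) : ℕ → Term
  | 0 => .par (emitC c) (.repInp (.nm c) 0 (emitC c))
  | k + 1 => .par .nil (nestD c k)

lemma divC_eq (c : Name) : OB c [] = .res c (nestD c 0) := rfl

lemma nestD_tau (c : Name) : ∀ k, Tau (nestD c k) (nestD c (k + 1)) := by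
  intro k
  induction k with
  | zero =>
    have h1 : Step (emitC c) (.lab (.out c c)) .nil := Step.out 0 rfl
    have h2 : Step (.repInp (.nm c) 0 (emitC c)) (.lab (.inp c c))
        (.par ((emitC c).subst1 0 c) (.repInp (.nm c) 0 (emitC c))) := Step.repInpStep c
    rw [subst1_closed (emitC_closed c)] at h2
    exact Step.commR h1 h2
  | succ k ih => exact Step.parR ih

lemma nestD_sil (c : Name) : ∀ k, sil (nestD c k) := by
  intro k
  induction k with
  | zero => simp [nestD, sil, emitC]
  | succ k ih => simpa [nestD, sil] using ih

lemma deb_lift_seq {c : Name} (hole : ℕ → Term) (hhole : ∀ k, Tau (hole k) (hole (k + 1)))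
    {B₀ : Term} (hD : Deb c (hole 0) B₀) :
    ∃ g : ℕ → Term, g 0 = B₀ ∧ ∀ k, Deb c (hole k) (g k) ∧ Tau (g k) (g (k + 1)) := by
  classical
  let F : ∀ k : ℕ, {U : Term // Deb c (hole k) U} := fun k =>
    Nat.rec ⟨B₀, hD⟩ (fun k prev =>
      ⟨(deb_lift_tau prev.2 (hhole k)).choose,
       (deb_lift_tau prev.2 (hhole k)).choose_spec.2⟩) k
  refine ⟨fun k => (F k).1, rfl, fun k => ⟨(F k).2, ?_⟩⟩
  exact (deb_lift_tau (F k).2 (hhole k)).choose_spec.1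

/-- Main 4a construction: a silent run of `P | OB c s` along the trace `s`. -/
lemma run4a {c : Name} {s : List Label} {P P₁ : Term} (htr : Tr P s P₁) :
    P.isPi → (∀ ℓ ∈ s, c ∉ lnms ℓ) → ∀ B, Deb c (OB c s) B →
    ∃ cs B', Deb c (OB c []) B' ∧ SPath (.par P B) (rl cs (.par P₁ B')) := by
  induction htr with
  | nil =>
    intro hpi hf B hD
    exact ⟨[], B, hD, SPath.refl _⟩
  | @tau P P' s' P₁ hτ htr' ih =>
    intro hpi hf B hD
    obtain ⟨cs, B', hD', hsp⟩ := ih (step_isPi hτ hpi).1 hf B hD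
    refine ⟨cs, B', hD', SPath.head (Step.parL hτ) ?_ hsp⟩
    exact ⟨isPi_sil _ hpi, deb_sil hD (sil_OB c _)⟩
  | @lab P P' s' P₁ ℓ hstep htr' ih =>
    intro hpi hf B hD
    have hfhd : c ∉ lnms ℓ := hf ℓ (by simp)
    have hftl : ∀ ℓ' ∈ s', c ∉ lnms ℓ' := fun ℓ' h' => hf ℓ' (by simp [h'])
    have hsilP : sil (.par P B) := ⟨isPi_sil _ hpi, deb_sil hD (sil_OB c _)⟩
    have hpi' := (step_isPi hstep hpi).1
    cases ℓ with
    | inp a b =>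
      have hOB : Step (OB c (.inp a b :: s'))
          (.lab (.out a b)) (.res c (.par (trigC c) (OB c s'))) := by
        exact Step.resStep (Step.parR (Step.sepOut 0 rfl rfl)) (notin_names hfhd)
      obtain ⟨B₁, hB₁, hD₁⟩ := deb_lift_lab hD hOB hfhd
      have hD₁' : Deb c (OB c s') B₁ := Deb.trans (Deb.trigD (Deb.refl _)) hD₁
      obtain ⟨cs, B', hD', hsp⟩ := ih hpi' hftl B₁ hD₁'
      exact ⟨cs, B', hD', SPath.head (Step.commL hstep hB₁) hsilP hsp⟩
    | out a b =>
      have hOB : Step (OB c (.out a b :: s'))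
          (.lab (.inp a b)) (.res c (.par (emitC c) (.par (.mat (.nm b) (.nm b) (OB c s'))
            (.mis (.nm b) (.nm b) .omega)))) := by
        have := Step.sepInp (ns := ![.nm a, .nm c]) (x := 0)
          (Ts := ![contC c b (OB c s'), .omega]) 0 rfl b
        rw [show (![contC c b (OB c s'), Term.omega] (0 : Fin 2)) = contC c b (OB c s')
            from rfl, subst_contC] at this
        exact Step.resStep (Step.parR this) (notin_names hfhd)
      obtain ⟨B₁, hB₁, hD₁⟩ := deb_lift_lab hD hOB hfhd
      have hD₁' : Deb c (OB c s') B₁ := Deb.trans (Deb.matD b (Deb.refl _)) hD₁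
      obtain ⟨cs, B', hD', hsp⟩ := ih hpi' hftl B₁ hD₁'
      exact ⟨cs, B', hD', SPath.head (Step.commR hstep hB₁) hsilP hsp⟩
    | bout a b =>
      have hOB : Step (OB c (.bout a b :: s'))
          (.lab (.inp a b)) (.res c (.par (emitC c) (.par (.mat (.nm b) (.nm b) (OB c s'))
            (.mis (.nm b) (.nm b) .omega)))) := by
        have := Step.sepInp (ns := ![.nm a, .nm c]) (x := 0)
          (Ts := ![contC c b (OB c s'), .omega]) 0 rfl b
        rw [show (![contC c b (OB c s'), Term.omega] (0 : Fin 2)) = contC c b (OB c s')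
            from rfl, subst_contC] at this
        exact Step.resStep (Step.parR this) (notin_names hfhd)
      obtain ⟨B₁, hB₁, hD₁⟩ := deb_lift_lab hD hOB hfhd
      have hD₁' : Deb c (OB c s') B₁ := Deb.trans (Deb.matD b (Deb.refl _)) hD₁
      obtain ⟨cs, B', hD', hsp⟩ := ih hpi' hftl B₁ hD₁'
      refine ⟨b :: cs, B', hD', SPath.head (Step.closeR hstep hB₁) hsilP ?_⟩
      exact spath_res b hsp

/-- 4a: if `P` has the trace `s` then the test of `P` by `OB c s` may fail. -/
lemma not_must_4a {P : Term} {s : List Label} {P₁ : Term} {c : Name}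
    (hpi : P.isPi) (htr : Tr P s P₁) (hf : ∀ ℓ ∈ s, c ∉ lnms ℓ) :
    ¬ MustSucceed (.par P (OB c s)) := by
  intro hMust
  obtain ⟨cs, B', hD', hsp⟩ := run4a htr hpi hf _ (Deb.refl _)
  obtain ⟨n, f, h0, hn, hp, hsil⟩ := spath_index hsp
  have hD'' : Deb c (.res c (nestD c 0)) B' := by rwa [divC_eq] at hD'
  obtain ⟨g, hg0, hg⟩ := deb_lift_seq (fun k => .res c (nestD c k))
    (fun k => Step.resStep (nestD_tau c k) (by simp [Act.names])) hD''
  set G : ℕ → Term := fun j => rl cs (.par P₁ (g j)) with hG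
  have hGtau : ∀ j, Tau (G j) (G (j + 1)) := fun j =>
    tau_rl (Step.parR (hg j).2) cs
  have hGsil : ∀ j, sil (G j) := by
    intro j
    have hj : sil (Term.par P₁ (g j)) :=
      ⟨isPi_sil _ (tr_isPi htr hpi), deb_sil (hg j).1 (nestD_sil c j)⟩
    exact sil_rl hj cs
  have hG0 : G 0 = rl cs (.par P₁ B') := by rw [hG]; simp [hg0]
  have hTS : TauSeq (glue f n G) := by
    intro i
    by_cases hin : i < n
    · rw [glue_le (by omega), glue_le (by omega)]
      exact hp i hin
    · obtain ⟨j, rfl⟩ : ∃ j, i = n + j := ⟨i - n, by omega⟩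
      rw [glue_add (by rw [hG0, hn]) j, show n + j + 1 = n + (j + 1) by omega,
        glue_add (by rw [hG0, hn])]
      exact hGtau j
  obtain ⟨i, hfire⟩ := hMust.2 (glue f n G) ⟨by rw [glue_le (by omega), h0], hTS⟩
  by_cases hin : i < n
  · exact hsil i hin (by rwa [glue_le (by omega)] at hfire)
  · obtain ⟨j, rfl⟩ : ∃ j, i = n + j := ⟨i - n, by omega⟩
    rw [glue_add (by rw [hG0, hn]) j] at hfire
    exact sil_no_fire (hGsil j) hfire
/-- Invariant for runs of `R | OB c s` (4b). -/
structure Inv (c : Name) (R : Term) (s : List Label) (N : Finset Name) (Z : Term) : Type where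
  cs : List Name
  R' : Term
  done : List Label
  sh : List Label
  rest : List Label
  B : Term
  hZ : Z = rl cs (.par R' B)
  hsplit : done ++ rest = s
  hne : rest ≠ []
  hD : Deb c (OB c rest) B
  hsim : List.Forall₂ simL done sh
  htr : Tr R sh R'
  hpi : R'.isPi
  hnm : nms R' ⊆ N
  hdesc : Descendant R R'

lemma mem_of_split {done rest : List Label} {s : List Label} {ℓ₀ : Label}
    (h : done ++ (ℓ₀ :: rest) = s) : ℓ₀ ∈ s := by
  subst h; simp

lemma inv_step {c : Name} {R : Term} {s : List Label} {N : Finset Name} {Z Z' : Term}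
    (hc : c ∉ N) (hfresh : ∀ ℓ ∈ s, lnms ℓ ⊆ N)
    (hnotr : ¬ ∃ sh R₁, List.Forall₂ simL s sh ∧ Tr R sh R₁)
    (d : Inv c R s N Z) (hτ : Tau Z Z') (hnofire : ¬ FiresOmega Z') :
    ∃ d' : Inv c R s N Z', (d'.rest.length < d.rest.length) ∨
      (d'.rest.length = d.rest.length ∧ Tau d.R' d'.R') := by
  obtain ⟨cs, R', done, sh, rest, B, hZ, hsplit, hne, hD, hsim, htr, hpi, hnm, hdesc⟩ := d
  obtain ⟨ℓ₀, rest', rfl⟩ := List.exists_cons_of_ne_nil hne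
  have hmem : ℓ₀ ∈ s := mem_of_split hsplit
  have hca : c ∉ lnms ℓ₀ := fun h => hc (hfresh ℓ₀ hmem h)
  subst hZ
  obtain ⟨W, hW, rfl⟩ := tau_rl_inv cs hτ
  cases hW with
  | parL h1 =>
    refine ⟨⟨cs, _, done, sh, ℓ₀ :: rest', B, rfl, hsplit, hne, hD, hsim,
      htr.snocTau h1, (step_isPi h1 hpi).1, (tauStep_nms h1).trans hnm,
      hdesc.tail ⟨_, h1⟩⟩, Or.inr ⟨rfl, h1⟩⟩
  | parR h1 =>
    exact absurd (fires_rl (fires_parR (deb_tau_fires hca hD h1)) cs) hnofire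
  | @commL _ _ _ _ a₀ b₀ h1 h2 =>
    rcases deb_lab_inv hca hD h2 with heq | ⟨a, b, hl0, heq, hDeb⟩ | ⟨a, b, b', hl0, heq, _⟩
    · exact absurd heq (by simp)
    · injection heq with ha hb
      subst ha; subst hb; subst hl0
      have htr' : Tr R (sh ++ [Label.inp a₀ b₀]) _ := htr.snocLab h1
      have hsim' : List.Forall₂ simL (done ++ [Label.inp a₀ b₀]) (sh ++ [Label.inp a₀ b₀]) :=
        List.rel_append hsim (List.Forall₂.cons rfl List.Forall₂.nil)
      have hsplit' : (done ++ [Label.inp a₀ b₀]) ++ rest' = s := by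
        rw [List.append_assoc]; simpa using hsplit
      cases rest' with
      | nil =>
        exact absurd ⟨_, _, hsplit' ▸ (by simpa using hsim'), htr'⟩ hnotr
      | cons ℓ₁ rest'' =>
        have hln : lnms (Label.inp a₀ b₀) ⊆ N := hfresh _ hmem
        refine ⟨⟨cs, _, done ++ [Label.inp a₀ b₀], sh ++ [Label.inp a₀ b₀], ℓ₁ :: rest'', _,
          rfl, hsplit', by simp, hDeb, hsim', htr', (step_isPi h1 hpi).1, ?_,
          hdesc.tail ⟨_, h1⟩⟩, Or.inl (by simp)⟩
        refine (step_nms h1).trans (Finset.union_subset hnm ?_)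
        simpa [anms] using hln
    · exact absurd heq (by simp)
  | @commR _ _ _ _ a₀ b₀ h1 h2 =>
    rcases deb_lab_inv hca hD h2 with heq | ⟨a, b, hl0, heq, _⟩ | ⟨a, b, b', hl0, heq, hres⟩
    · exact absurd heq (by simp)
    · exact absurd heq (by simp)
    · injection heq with ha hb
      subst ha; subst hb
      rcases hres with ⟨rfl, hDeb⟩ | hfire
      · have htr' : Tr R (sh ++ [Label.out a₀ b₀]) _ := htr.snocLab h1
        have hsimL : simL ℓ₀ (Label.out a₀ b₀) := by
          rcases hl0 with rfl | rfl
          · exact Or.inl rfl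
          · exact Or.inl rfl
        have hsim' : List.Forall₂ simL (done ++ [ℓ₀]) (sh ++ [Label.out a₀ b₀]) :=
          List.rel_append hsim (List.Forall₂.cons hsimL List.Forall₂.nil)
        have hsplit' : (done ++ [ℓ₀]) ++ rest' = s := by
          rw [List.append_assoc]; simpa using hsplit
        cases rest' with
        | nil =>
          exact absurd ⟨_, _, hsplit' ▸ (by simpa using hsim'), htr'⟩ hnotr
        | cons ℓ₁ rest'' =>
          have hln : lnms ℓ₀ ⊆ N := hfresh _ hmem
          refine ⟨⟨cs, _, done ++ [ℓ₀], sh ++ [Label.out a₀ b₀], ℓ₁ :: rest'', _,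
            rfl, hsplit', by simp, hDeb, hsim', htr', (step_isPi h1 hpi).1, ?_,
            hdesc.tail ⟨_, h1⟩⟩, Or.inl (by simp)⟩
          refine (step_nms h1).trans (Finset.union_subset hnm ?_)
          rcases hl0 with rfl | rfl <;> simpa [anms, lnms] using hln
      · exact absurd (fires_rl (fires_parR hfire) cs) hnofire
  | @closeL _ _ _ _ a₀ c₀ h1 h2 =>
    rcases deb_lab_inv hca hD h2 with heq | ⟨a, b, hl0, heq, _⟩ | ⟨a, b, b', hl0, heq, _⟩
    · injection heq with ha hb
      subst ha
      exact absurd (hnm (step_inp_mem h1)) hc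
    · exact absurd heq (by simp)
    · exact absurd heq (by simp)
  | @closeR _ _ _ _ a₀ c₀ h1 h2 =>
    rcases deb_lab_inv hca hD h2 with heq | ⟨a, b, hl0, heq, _⟩ | ⟨a, b, b', hl0, heq, hres⟩
    · exact absurd heq (by simp)
    · exact absurd heq (by simp)
    · injection heq with ha hb
      subst ha; subst hb
      rcases hres with ⟨rfl, hDeb⟩ | hfire
      · have htr' : Tr R (sh ++ [Label.bout a₀ c₀]) _ := htr.snocLab h1
        have hsimL : simL ℓ₀ (Label.bout a₀ c₀) := by
          rcases hl0 with rfl | rfl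
          · exact Or.inr rfl
          · exact Or.inr rfl
        have hsim' : List.Forall₂ simL (done ++ [ℓ₀]) (sh ++ [Label.bout a₀ c₀]) :=
          List.rel_append hsim (List.Forall₂.cons hsimL List.Forall₂.nil)
        have hsplit' : (done ++ [ℓ₀]) ++ rest' = s := by
          rw [List.append_assoc]; simpa using hsplit
        cases rest' with
        | nil =>
          exact absurd ⟨_, _, hsplit' ▸ (by simpa using hsim'), htr'⟩ hnotr
        | cons ℓ₁ rest'' =>
          have hln : lnms ℓ₀ ⊆ N := hfresh _ hmem
          refine ⟨⟨cs ++ [c₀], _, done ++ [ℓ₀], sh ++ [Label.bout a₀ c₀], ℓ₁ :: rest'', _,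
            rl_snoc cs c₀ _, hsplit', by simp, hDeb, hsim', htr', (step_isPi h1 hpi).1, ?_,
            hdesc.tail ⟨_, h1⟩⟩, Or.inl (by simp)⟩
          refine (step_nms h1).trans (Finset.union_subset hnm ?_)
          rcases hl0 with rfl | rfl <;> simpa [anms, lnms] using hln
      · exact absurd (fires_rl (fires_res (fires_parR hfire)) cs) hnofire
/-- 4b: a strongly convergent process without the trace must pass `OB c s`. -/
lemma must_4b {c : Name} {R : Term} {s : List Label} {N : Finset Name}
    (hc : c ∉ N) (hRN : nms R ⊆ N) (hfresh : ∀ ℓ ∈ s, lnms ℓ ⊆ N)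
    (hpi : R.isPi) (hconv : StronglyConvergent R)
    (hnotr : ¬ ∃ sh R₁, List.Forall₂ simL s sh ∧ Tr R sh R₁) :
    MustSucceed (.par R (OB c s)) := by
  classical
  have hsne : s ≠ [] := by
    rintro rfl
    exact hnotr ⟨[], R, List.Forall₂.nil, Tr.nil R⟩
  have d0 : Inv c R s N (.par R (OB c s)) :=
    ⟨[], R, [], [], s, OB c s, rfl, rfl, hsne, Deb.refl _, List.Forall₂.nil, Tr.nil R,
      hpi, hRN, Relation.ReflTransGen.refl⟩
  constructor
  · intro n f hFCS
    by_contra hno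
    push_neg at hno
    have key : ∀ i, i ≤ n → Nonempty (Inv c R s N (f i)) := by
      intro i
      induction i with
      | zero => exact fun _ => ⟨hFCS.1.symm ▸ d0⟩
      | succ i ih =>
        intro h
        obtain ⟨d⟩ := ih (by omega)
        obtain ⟨d', _⟩ := inv_step hc hfresh hnotr d (hFCS.2.1 i (by omega))
          (hno (i + 1) (by omega))
        exact ⟨d'⟩
    obtain ⟨d⟩ := key n le_rfl
    obtain ⟨cs, R', done, sh, rest, B, hZ, hsplit, hne2, hD, hsim, htr, hpi', hnm, hdesc⟩ := d
    obtain ⟨ℓ₀, rest', hrest⟩ := List.exists_cons_of_ne_nil hne2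
    rw [hrest] at hD
    obtain ⟨B', hB'⟩ := deb_has_tau hD
    refine hFCS.2.2 (rl cs (.par R' B')) ?_
    rw [hZ]
    exact tau_rl (Step.parR hB') cs
  · intro f hInf
    by_contra hno
    push_neg at hno
    have hstep : ∀ k (d : Inv c R s N (f k)), ∃ d' : Inv c R s N (f (k + 1)),
        (d'.rest.length < d.rest.length) ∨
        (d'.rest.length = d.rest.length ∧ Tau d.R' d'.R') :=
      fun k d => inv_step hc hfresh hnotr d (hInf.2 k) (hno (k + 1))
    let D : ∀ k, Inv c R s N (f k) := fun k =>
      Nat.rec (hInf.1.symm ▸ d0) (fun k dk => (hstep k dk).choose) k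
    have hDs : ∀ k, ((D (k + 1)).rest.length < (D k).rest.length) ∨
        ((D (k + 1)).rest.length = (D k).rest.length ∧ Tau (D k).R' (D (k + 1)).R') :=
      fun k => (hstep k (D k)).choose_spec
    have hmono : ∀ k, (D (k + 1)).rest.length ≤ (D k).rest.length := by
      intro k
      rcases hDs k with h | ⟨h, _⟩ <;> omega
    have hEx : ∃ m, ∃ k, (D k).rest.length = m := ⟨_, 0, rfl⟩
    obtain ⟨K, hK⟩ := Nat.find_spec hEx
    have hmin : ∀ k, Nat.find hEx ≤ (D k).rest.length := by
      intro k
      by_contra h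
      exact Nat.find_min hEx (by omega) ⟨k, rfl⟩
    have hconst : ∀ j, (D (K + j)).rest.length = Nat.find hEx := by
      intro j
      induction j with
      | zero => exact hK
      | succ j ih =>
        have h1 := hmono (K + j)
        have h2 := hmin (K + j + 1)
        have e : K + (j + 1) = K + j + 1 := rfl
        rw [e]
        omega
    have htau : ∀ j, Tau ((D (K + j)).R') ((D (K + j + 1)).R') := by
      intro j
      rcases hDs (K + j) with h | ⟨_, h⟩
      · have h1 := hconst j
        have h2 := hconst (j + 1)
        have e : K + (j + 1) = K + j + 1 := rfl
        rw [e] at h2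
        omega
      · exact h
    exact absurd ⟨fun j => (D (K + j)).R', rfl, fun j => htau j⟩ (hconv _ (D K).hdesc)
/-- Transfer of may-success across must-equivalence. -/
lemma may_transfer {P Q O : Term} (hP : IsPiProc P) (hQ : IsPiProc Q)
    (hscQ : StronglyConvergent Q) (h : MustEq P Q) (hO : IsObserver O)
    (hmay : MaySucceed (.par P O)) : MaySucceed (.par Q O) := by
  obtain ⟨Z, hw, hfire⟩ := reach_of_may hmay
  obtain ⟨cs, s, P', O', rfl, hTr, hCo⟩ := decomp hw
  have hfireO : FiresOmega O' := fires_split hfire (tr_isPi hTr hP.1)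
  set N := nms P ∪ nms Q ∪ nms O with hN
  obtain ⟨c, hc⟩ := Infinite.exists_notMem_finset N
  have hPN : nms P ⊆ N := by intro x hx; simp [hN, hx]
  have hQN : nms Q ⊆ N := by intro x hx; simp [hN, hx]
  have hON : nms O ⊆ N := by intro x hx; simp [hN, hx]
  obtain ⟨hfresh, _, _⟩ := names_bound s P O P' O' hTr hCo hPN hON
  have hfs : ∀ ℓ ∈ s, c ∉ lnms ℓ := fun ℓ hl hcl => hc (hfresh ℓ hl hcl)
  have h4a : ¬ MustSucceed (.par P (OB c s)) := not_must_4a hP.1 hTr hfs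
  have hobs : IsObserver (OB c s) := OB_closed c s
  have h4b : ¬ MustSucceed (.par Q (OB c s)) := fun hm => h4a ((h _ hobs).2 hm)
  have hex : ∃ sh Q₁, List.Forall₂ simL s sh ∧ Tr Q sh Q₁ := by
    by_contra hnotr
    exact h4b (must_4b hc hQN hfresh hQ.1 hscQ hnotr)
  obtain ⟨sh, Q₁, hsim, hTrQ⟩ := hex
  obtain ⟨cs', hw'⟩ := compose s sh Q O Q₁ O' hsim hTrQ hCo
  exact may_of_reach hw' (fires_rl (fires_parR hfireO) cs')

end MustMay
/-- for strongly convergent π-processes, must equivalence implies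
may equivalence. -/
theorem must_implies_may (P Q : Term) (hP : IsPiProc P) (hQ : IsPiProc Q)
    (hscP : StronglyConvergent P) (hscQ : StronglyConvergent Q)
    (h : MustEq P Q) : MayEq P Q := by
  intro O hO
  constructor
  · exact fun hmay => MustMay.may_transfer hP hQ hscQ h hO hmay
  · exact fun hmay => MustMay.may_transfer hQ hP hscP (fun O' hO' => (h O' hO').symm) hO hmay
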